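/- arXiv:1709.01374 — 5 statements merged into one kernel-verified Lean document; each statement's English description precedes it below -/
import Mathlib

section
/- For every k ∈ ℝ² with k1 ≠ 0, the symbol G̃(k) := |k2| · |k1| / (|k1|³ + k2²) satisfies G̃(k) ≤ C · d(k,0)^(-1/2) with d(k,0) = |k1| + |k2|^(2/3), for a universal constant C. -/
/-- The symbol `G̃(k) = |k₂| · |k₁| / (|k₁|³ + k₂²)` is bounded by a universal
constant times `d(k,0)^(-1/2)`, where `d(k,0) = |k₁| + |k₂|^(2/3)`. -/
theorem symbol_Gtilde_bound :
    ∃ C : ℝ, 0 < C ∧ ∀ k : ℝ × ℝ, k.1 ≠ 0 →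
      |k.2| * |k.1| / (|k.1| ^ 3 + k.2 ^ 2)
        ≤ C * (|k.1| + |k.2| ^ ((2 : ℝ) / 3)) ^ (-(1 : ℝ) / 2) := by
  refine ⟨2, by norm_num, ?_⟩
  intro k hk
  set a := |k.1| with ha'
  set b := |k.2| with hb'
  have ha : 0 < a := abs_pos.mpr hk
  have hb : 0 ≤ b := abs_nonneg _
  have hb2 : k.2 ^ 2 = b ^ 2 := (sq_abs _).symm
  rw [hb2]
  set s := a ^ ((1:ℝ)/2) with hs'
  set t := b ^ ((1:ℝ)/3) with ht'
  have hs0 : 0 ≤ s := Real.rpow_nonneg ha.le _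
  have ht0 : 0 ≤ t := Real.rpow_nonneg hb _
  have hs2 : s ^ 2 = a := by
    rw [hs', ← Real.rpow_natCast (a ^ ((1:ℝ)/2)) 2, ← Real.rpow_mul ha.le]
    norm_num
  have ht3 : t ^ 3 = b := by
    rw [ht', ← Real.rpow_natCast (b ^ ((1:ℝ)/3)) 3, ← Real.rpow_mul hb]
    norm_num
  have ht2 : b ^ ((2:ℝ)/3) = t ^ 2 := by
    rw [ht', ← Real.rpow_natCast (b ^ ((1:ℝ)/3)) 2, ← Real.rpow_mul hb]
    norm_num
  have hD : 0 < a ^ 3 + b ^ 2 := by positivity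
  have hS : 0 < a + b ^ ((2:ℝ)/3) := by positivity
  have hP : 0 < (a + b ^ ((2:ℝ)/3)) ^ ((1:ℝ)/2) := Real.rpow_pos_of_pos hS _
  have hSle : (a + b ^ ((2:ℝ)/3)) ^ ((1:ℝ)/2) ≤ s + t := by
    have h1 : a + b ^ ((2:ℝ)/3) ≤ (s + t) ^ 2 := by
      rw [ht2]; nlinarith [mul_nonneg hs0 ht0, hs2]
    calc (a + b ^ ((2:ℝ)/3)) ^ ((1:ℝ)/2)
        ≤ ((s + t) ^ 2) ^ ((1:ℝ)/2) := Real.rpow_le_rpow hS.le h1 (by norm_num)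
      _ = s + t := by
          rw [← Real.rpow_natCast (s + t) 2, ← Real.rpow_mul (by positivity)]
          norm_num
  have hneg : (-(1:ℝ)/2) = -((1:ℝ)/2) := by norm_num
  rw [hneg, Real.rpow_neg hS.le, ← div_eq_mul_inv]
  rw [div_le_div_iff₀ hD hP]
  have key : b * a * (s + t) ≤ 2 * (a ^ 3 + b ^ 2) := by
    have key2 : t ^ 3 * s ^ 2 * (s + t) ≤ 2 * ((s ^ 2) ^ 3 + (t ^ 3) ^ 2) := by
      nlinarith [sq_nonneg (s ^ 3 - t ^ 3),
        mul_nonneg (sq_nonneg (s ^ 2 - t ^ 2)) (by positivity : (0:ℝ) ≤ s ^ 2 + 2 * t ^ 2)]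
    calc b * a * (s + t) = t ^ 3 * s ^ 2 * (s + t) := by rw [hs2, ht3]
      _ ≤ 2 * ((s ^ 2) ^ 3 + (t ^ 3) ^ 2) := key2
      _ = 2 * (a ^ 3 + b ^ 2) := by rw [hs2, ht3]
  calc b * a * (a + b ^ ((2:ℝ)/3)) ^ ((1:ℝ)/2)
      ≤ b * a * (s + t) := by
        apply mul_le_mul_of_nonneg_left hSle (by positivity)
    _ ≤ 2 * (a ^ 3 + b ^ 2) := key
end

section
/- There is a constant C such that for all T > 0: ∑_{k ∈ (2πℤ)², k ≠ 0} exp(-T · d(k,0)³) ≤ C · T^(-5/6), where d(k,0) = |k1| + |k2|^(2/3). -/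
/-!
Since `2π ≥ 1` and `(x + y)³ ≥ x³ + y³` for `x, y ≥ 0`, we have `d(k,0)³ ≥ |m₁|³ + m₂²` for
`k = 2πm`. Hence each term is dominated by `exp (-T |m₁|³) · exp (-T m₂²)`, and the whole sum by
`(1 + 2 a₃) (1 + 2 a₂) - 1`, where `a_k = ∑_{n ≥ 1} exp (-T nᵏ)`. Splitting `a_k` at
`N = ⌈T^(-1/k)⌉` and comparing the tail with a geometric series gives `a_k ≤ 4 T^(-1/k)` for
`T ≤ 1`, while `a_k ≤ 1/T` for `T ≥ 1`. The exponent `5/6 = 1/3 + 1/2` comes from the cross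
term `a₃ a₂`.
-/

open Real

/-- The anisotropic distance to the origin of a lattice point `k = 2πm ∈ (2πℤ)²`:
`d(k,0) = |k₁| + |k₂|^(2/3)`. -/
noncomputable def latticeDist (m : ℤ × ℤ) : ℝ :=
  |2 * π * (m.1 : ℝ)| + |2 * π * (m.2 : ℝ)| ^ ((2 : ℝ) / 3)

section GeometricMajorant

variable {u : ℝ} {f : ℕ → ℝ}

lemma exp_neg_le_exp_neg_pow_succ (hf : ∀ n, u * (n + 1) ≤ f n) (n : ℕ) :
    exp (-f n) ≤ exp (-u) ^ (n + 1) := by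
  rw [← exp_nat_mul, exp_le_exp]
  push_cast
  linarith [hf n]

lemma hasSum_exp_neg_pow_succ (hu : 0 < u) :
    HasSum (fun n : ℕ => exp (-u) ^ (n + 1)) ((exp u - 1)⁻¹) := by
  have h := (hasSum_geometric_of_lt_one (exp_pos (-u)).le
    (exp_lt_one_iff.2 (by linarith))).mul_left (exp (-u))
  have hval : exp (-u) * (1 - exp (-u))⁻¹ = (exp u - 1)⁻¹ := by
    have : exp u - 1 ≠ 0 := by linarith [add_one_lt_exp hu.ne']
    rw [exp_neg]
    field_simp
  simpa only [pow_succ', hval] using h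

lemma summable_exp_neg_of_linear_le (hu : 0 < u) (hf : ∀ n, u * (n + 1) ≤ f n) :
    Summable fun n => exp (-f n) :=
  (hasSum_exp_neg_pow_succ hu).summable.of_nonneg_of_le (fun _ => (exp_pos _).le)
    (exp_neg_le_exp_neg_pow_succ hf)

lemma tsum_exp_neg_le_inv_of_linear_le (hu : 0 < u) (hf : ∀ n, u * (n + 1) ≤ f n) :
    ∑' n, exp (-f n) ≤ u⁻¹ := by
  calc ∑' n, exp (-f n) ≤ ∑' n : ℕ, exp (-u) ^ (n + 1) :=
        (summable_exp_neg_of_linear_le hu hf).tsum_le_tsum (exp_neg_le_exp_neg_pow_succ hf)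
          (hasSum_exp_neg_pow_succ hu).summable
    _ = (exp u - 1)⁻¹ := (hasSum_exp_neg_pow_succ hu).tsum_eq
    _ ≤ u⁻¹ := inv_anti₀ hu (by linarith [add_one_le_exp u])

end GeometricMajorant

noncomputable def expPowSum (T : ℝ) (k : ℕ) : ℝ :=
  ∑' n : ℕ, exp (-T * ((n : ℝ) + 1) ^ k)

section PowerSums

variable {T : ℝ} {k : ℕ}

lemma expPowSum_nonneg : 0 ≤ expPowSum T k := by
  unfold expPowSum; positivity

lemma mul_succ_le_mul_succ_pow (hT : 0 ≤ T) (hk : k ≠ 0) (n : ℕ) :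
    T * ((n : ℝ) + 1) ≤ T * ((n : ℝ) + 1) ^ k :=
  mul_le_mul_of_nonneg_left (le_self_pow₀ (by linarith [n.cast_nonneg (α := ℝ)]) hk) hT

lemma mul_succ_le_mul_add_succ_pow (hT : 0 ≤ T) (hk : k ≠ 0) (N n : ℕ) :
    T * N ^ (k - 1) * (n + 1) ≤ T * (((n + N : ℕ) : ℝ) + 1) ^ k := by
  have hN : (N : ℝ) ≤ ((n + N : ℕ) : ℝ) + 1 := by
    push_cast; linarith [n.cast_nonneg (α := ℝ)]
  have hn : (n : ℝ) + 1 ≤ ((n + N : ℕ) : ℝ) + 1 := by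
    push_cast; linarith [N.cast_nonneg (α := ℝ)]
  rw [mul_assoc, ← Nat.sub_add_cancel (Nat.one_le_iff_ne_zero.2 hk), pow_succ, Nat.add_sub_cancel]
  gcongr

lemma summable_exp_neg_mul_pow (hT : 0 < T) (hk : k ≠ 0) :
    Summable fun n : ℕ => exp (-T * ((n : ℝ) + 1) ^ k) := by
  simpa only [neg_mul] using summable_exp_neg_of_linear_le hT (mul_succ_le_mul_succ_pow hT.le hk)

lemma expPowSum_le_inv (hT : 0 < T) (hk : k ≠ 0) :
    expPowSum T k ≤ T⁻¹ := by
  unfold expPowSum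
  simpa only [neg_mul] using tsum_exp_neg_le_inv_of_linear_le hT (mul_succ_le_mul_succ_pow hT.le hk)

/-- The first `N` terms are at most `1`; beyond them the exponent grows at least linearly, with
slope `T N^(k-1) ≥ 1/N`. -/
lemma expPowSum_le_two_mul (hT : 0 < T) (hk : k ≠ 0) {N : ℕ}
    (hN : 1 ≤ T * (N : ℝ) ^ k) :
    expPowSum T k ≤ 2 * N := by
  have hN0 : 0 < (N : ℝ) := by
    rcases N.eq_zero_or_pos with rfl | hN0
    · norm_num [zero_pow hk] at hN
    · exact_mod_cast hN0
  set u := T * (N : ℝ) ^ (k - 1)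
  have hu : 0 < u := by positivity
  have head : ∑ n ∈ Finset.range N, exp (-T * ((n : ℝ) + 1) ^ k) ≤ N := by
    simpa using Finset.sum_le_card_nsmul (Finset.range N) _ 1 fun n _ =>
      exp_le_one_iff.2 (by have := pow_nonneg (by positivity : (0:ℝ) ≤ n + 1) k; nlinarith)
  have tail : ∑' n : ℕ, exp (-T * (((n + N : ℕ) : ℝ) + 1) ^ k) ≤ u⁻¹ := by
    simpa only [neg_mul] using tsum_exp_neg_le_inv_of_linear_le hu
      (mul_succ_le_mul_add_succ_pow hT.le hk N)
  have hinv : u⁻¹ ≤ N := by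
    rw [inv_le_iff_one_le_mul₀ hu]
    calc (1 : ℝ) ≤ T * (N : ℝ) ^ k := hN
      _ = N * u := by rw [← pow_sub_one_mul hk]; ring
  rw [expPowSum, ← (summable_exp_neg_mul_pow hT hk).sum_add_tsum_nat_add N]
  linarith

lemma expPowSum_le_rpow_of_le_one (hT : 0 < T) (hT1 : T ≤ 1) (hk : k ≠ 0) :
    expPowSum T k ≤ 4 * T ^ (-(k : ℝ)⁻¹) := by
  set M := T ^ (-(k : ℝ)⁻¹)
  have hM1 : 1 ≤ M := one_le_rpow_of_pos_of_le_one_of_nonpos hT hT1 (by simp)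
  have hMk : T * M ^ k = 1 := by
    rw [← rpow_natCast, ← rpow_mul hT.le, neg_mul, inv_mul_cancel₀ (by exact_mod_cast hk),
      rpow_neg_one, mul_inv_cancel₀ hT.ne']
  have hN : 1 ≤ T * (⌈M⌉₊ : ℝ) ^ k := hMk ▸ by gcongr; exact Nat.le_ceil M
  calc _ ≤ 2 * (⌈M⌉₊ : ℝ) := expPowSum_le_two_mul hT hk hN
    _ ≤ 4 * M := by linarith [Nat.ceil_lt_add_one (zero_le_one.trans hM1)]

lemma expPowSum_le_rpow (hT : 0 < T) (hk : k ≠ 0) {s : ℝ} (hks : (k : ℝ)⁻¹ ≤ s)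
    (hs1 : s ≤ 1) :
    expPowSum T k ≤ 4 * T ^ (-s) := by
  rcases le_or_gt T 1 with hT1 | hT1
  · calc _ ≤ 4 * T ^ (-(k : ℝ)⁻¹) := expPowSum_le_rpow_of_le_one hT hT1 hk
      _ ≤ 4 * T ^ (-s) := by gcongr 4 * ?_; exact rpow_le_rpow_of_exponent_ge hT hT1 (by linarith)
  · calc _ ≤ T ^ (-1 : ℝ) := (rpow_neg_one T).symm ▸ expPowSum_le_inv hT hk
      _ ≤ T ^ (-s) := rpow_le_rpow_of_exponent_le hT1.le (by linarith)
      _ ≤ 4 * T ^ (-s) := by linarith [rpow_pos_of_pos hT (-s)]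

lemma hasSum_int_exp_neg_mul_abs_pow (hT : 0 < T) (hk : k ≠ 0) :
    HasSum (fun n : ℤ => exp (-T * |(n : ℝ)| ^ k)) (1 + 2 * expPowSum T k) := by
  have h : HasSum _ (expPowSum T k) := (summable_exp_neg_mul_pow hT hk).hasSum
  have hpos : HasSum (fun n : ℕ => exp (-T * |((n + 1 : ℤ) : ℝ)| ^ k)) (expPowSum T k) := by
    convert h using 4 with n
    push_cast
    rw [abs_of_nonneg (by positivity)]
  have hneg : HasSum (fun n : ℕ => exp (-T * |((-(n + 1) : ℤ) : ℝ)| ^ k))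
      (expPowSum T k) := by
    convert h using 4 with n
    push_cast
    rw [abs_neg, abs_of_nonneg (by positivity)]
  convert HasSum.of_add_one_of_neg_add_one
    (f := fun n : ℤ => exp (-T * |(n : ℝ)| ^ k)) hpos hneg using 1
  simp only [Int.cast_zero, abs_zero, zero_pow hk, mul_zero, exp_zero]
  ring

end PowerSums

lemma one_add_two_mul_expPowSum_mul_sub_one_le {T : ℝ} (hT : 0 < T) :
    (1 + 2 * expPowSum T 3) * (1 + 2 * expPowSum T 2) - 1 ≤ 80 * T ^ (-(5 : ℝ) / 6) := by
  have h₃ := expPowSum_le_rpow hT three_ne_zero (s := 5 / 6) (by norm_num) (by norm_num)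
  have h₂ := expPowSum_le_rpow hT two_ne_zero (s := 5 / 6) (by norm_num) (by norm_num)
  have hcross : expPowSum T 3 * expPowSum T 2 ≤ 16 * T ^ (-(5 / 6) : ℝ) :=
    calc expPowSum T 3 * expPowSum T 2
        ≤ (4 * T ^ (-(1 / 3) : ℝ)) * (4 * T ^ (-(1 / 2) : ℝ)) :=
          mul_le_mul (expPowSum_le_rpow hT three_ne_zero (by norm_num) (by norm_num))
            (expPowSum_le_rpow hT two_ne_zero (by norm_num) (by norm_num)) expPowSum_nonneg
            (by positivity)
      _ = 16 * T ^ (-(5 / 6) : ℝ) := by rw [mul_mul_mul_comm, ← rpow_add hT]; norm_num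
  rw [neg_div]
  linarith

lemma HasSum.mul_compl_singleton {ι κ : Type*} {f : ι → ℝ} {g : κ → ℝ} {a b : ℝ}
    (hf : HasSum f a) (hg : HasSum g b) (hf0 : 0 ≤ f) (hg0 : 0 ≤ g) (p : ι × κ) :
    HasSum (fun x : {x : ι × κ // x ≠ p} => f x.1.1 * g x.1.2) (a * b - f p.1 * g p.2) := by
  have hprod := hf.mul hg (hf.summable.mul_of_nonneg hg.summable hf0 hg0)
  have hp : HasSum ((fun x : ι × κ => f x.1 * g x.2) ∘ ((↑) : ({p} : Set (ι × κ)) → ι × κ))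
      (f p.1 * g p.2) := hasSum_singleton p (fun x : ι × κ => f x.1 * g x.2)
  refine hp.hasSum_compl_iff.2 ?_
  rwa [add_sub_cancel]

lemma abs_le_abs_two_pi_mul (x : ℝ) : |x| ≤ |2 * π * x| := by
  rw [abs_mul, abs_of_pos two_pi_pos]
  exact le_mul_of_one_le_left (abs_nonneg x) (by linarith [pi_gt_three])

lemma abs_cube_add_sq_le_latticeDist_cube (m : ℤ × ℤ) :
    |(m.1 : ℝ)| ^ 3 + |(m.2 : ℝ)| ^ 2 ≤ latticeDist m ^ 3 := by
  have hy : |(m.2 : ℝ)| ^ 2 ≤ (|2 * π * (m.2 : ℝ)| ^ ((2 : ℝ) / 3)) ^ 3 := by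
    rw [← rpow_natCast (|2 * π * (m.2 : ℝ)| ^ ((2 : ℝ) / 3)) 3, ← rpow_mul (abs_nonneg _),
      show (2 : ℝ) / 3 * (3 : ℕ) = (2 : ℕ) by norm_num, rpow_natCast]
    exact pow_le_pow_left₀ (abs_nonneg _) (abs_le_abs_two_pi_mul _) 2
  have hx0 : 0 ≤ |2 * π * (m.1 : ℝ)| := abs_nonneg _
  have hy0 : 0 ≤ |2 * π * (m.2 : ℝ)| ^ ((2 : ℝ) / 3) := rpow_nonneg (abs_nonneg _) _
  calc |(m.1 : ℝ)| ^ 3 + |(m.2 : ℝ)| ^ 2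
      ≤ |2 * π * (m.1 : ℝ)| ^ 3 + (|2 * π * (m.2 : ℝ)| ^ ((2 : ℝ) / 3)) ^ 3 :=
        add_le_add (pow_le_pow_left₀ (abs_nonneg _) (abs_le_abs_two_pi_mul _) 3) hy
    _ ≤ latticeDist m ^ 3 := by
      unfold latticeDist
      nlinarith [mul_nonneg (mul_nonneg hx0 hx0) hy0, mul_nonneg (mul_nonneg hx0 hy0) hy0]

/-- Heat-kernel sum bound: the sum over nonzero lattice points of exp(-T d(k,0)^3) is at most C T^(-5/6). -/
theorem lattice_exp_sum_bound :
    ∃ C : ℝ, 0 < C ∧ ∀ T : ℝ, 0 < T →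
      Summable (fun m : {m : ℤ × ℤ // m ≠ 0} =>
        Real.exp (-T * latticeDist m ^ 3)) ∧
      (∑' m : {m : ℤ × ℤ // m ≠ 0}, Real.exp (-T * latticeDist m ^ 3))
        ≤ C * T ^ (-(5 : ℝ) / 6) := by
  refine ⟨80, by norm_num, fun T hT => ?_⟩
  have hmaj := (hasSum_int_exp_neg_mul_abs_pow hT three_ne_zero).mul_compl_singleton
    (hasSum_int_exp_neg_mul_abs_pow hT two_ne_zero) (fun _ => (exp_pos _).le)
    (fun _ => (exp_pos _).le) 0
  have hle (m : {m : ℤ × ℤ // m ≠ 0}) : exp (-T * latticeDist m ^ 3) ≤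
      exp (-T * |(m.1.1 : ℝ)| ^ 3) * exp (-T * |(m.1.2 : ℝ)| ^ 2) := by
    rw [← exp_add, exp_le_exp]
    nlinarith [abs_cube_add_sq_le_latticeDist_cube m.1]
  have hsum := hmaj.summable.of_nonneg_of_le (fun _ => (exp_pos _).le) hle
  refine ⟨hsum, (hsum.tsum_le_tsum hle hmaj.summable).trans_eq hmaj.tsum_eq |>.trans ?_⟩
  simp only [Prod.fst_zero, Prod.snd_zero, Int.cast_zero, abs_zero, ne_eq, OfNat.ofNat_ne_zero,
    not_false_eq_true, zero_pow, mul_zero, exp_zero, mul_one]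
  exact one_add_two_mul_expPowSum_mul_sub_one_le hT
end

section
/- There is a constant C such that for all T > 0: ∑_{k ∈ (2πℤ)², k ≠ 0} exp(-T · d(k,0)³) · d(k,0)² ≤ C · T^(-3/2), where d(k,0) = |k1| + |k2|^(2/3). -/
open Real

lemma expB1 {x : ℝ} (hx : 0 ≤ x) : Real.exp (-x^3) ≤ 3 * Real.exp (-x) := by
  have h : -x^3 ≤ 1 + -x := by nlinarith [mul_nonneg hx (sq_nonneg (x-1)), sq_nonneg (2*x-1)]
  calc Real.exp (-x^3) ≤ Real.exp (1 + -x) := Real.exp_le_exp.mpr h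
    _ = Real.exp 1 * Real.exp (-x) := Real.exp_add 1 (-x)
    _ ≤ 3 * Real.exp (-x) := by
        have := Real.exp_one_lt_d9
        nlinarith [Real.exp_pos (-x)]

lemma sq_le_exp {x : ℝ} (hx : 0 ≤ x) : x^2 ≤ 4 * Real.exp x := by
  have h1 : x/2 + 1 ≤ Real.exp (x/2) := Real.add_one_le_exp (x/2)
  have h2 : Real.exp x = Real.exp (x/2) * Real.exp (x/2) := by
    rw [← Real.exp_add]; ring_nf
  nlinarith [Real.exp_pos (x/2)]

lemma expB2 {x : ℝ} (hx : 0 ≤ x) : x^2 * Real.exp (-x^3) ≤ 36 * Real.exp (-x) := by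
  have h0 : x - x^3 ≤ 2 + -x := by
    nlinarith [mul_nonneg (by linarith : (0:ℝ) ≤ x + 2) (sq_nonneg (x-1))]
  have h1 : x^2 * Real.exp (-x^3) ≤ 4 * Real.exp x * Real.exp (-x^3) :=
    mul_le_mul_of_nonneg_right (sq_le_exp hx) (Real.exp_pos _).le
  have h2 : Real.exp x * Real.exp (-x^3) = Real.exp (x - x^3) := by
    rw [← Real.exp_add]; ring_nf
  have h3 : Real.exp (x - x^3) ≤ Real.exp (2 + -x) := Real.exp_le_exp.mpr h0
  have h4 : Real.exp (2 + -x) = Real.exp 2 * Real.exp (-x) := Real.exp_add 2 (-x)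
  have h5 : Real.exp 2 ≤ 9 := by
    have h := Real.exp_one_lt_d9
    have : Real.exp 2 = Real.exp 1 * Real.exp 1 := by rw [← Real.exp_add]; norm_num
    nlinarith [Real.exp_pos 1]
  nlinarith [Real.exp_pos (-x), Real.exp_pos (-x^3), Real.exp_pos x]

lemma expB3 {x : ℝ} (hx : 0 ≤ x) : Real.exp (-x^2) ≤ 3 * Real.exp (-x) := by
  have h : -x^2 ≤ 1 + -x := by nlinarith [sq_nonneg (x-1)]
  calc Real.exp (-x^2) ≤ Real.exp (1 + -x) := Real.exp_le_exp.mpr h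
    _ = Real.exp 1 * Real.exp (-x) := Real.exp_add 1 (-x)
    _ ≤ 3 * Real.exp (-x) := by
        have := Real.exp_one_lt_d9
        nlinarith [Real.exp_pos (-x)]

lemma expB4 {x : ℝ} (hx : 0 ≤ x) : x ^ ((4:ℝ)/3) * Real.exp (-x^2) ≤ 15 * Real.exp (-x) := by
  have hr : x ^ ((4:ℝ)/3) ≤ 1 + x^2 := by
    rcases le_total x 1 with h | h
    · have := Real.rpow_le_one hx h (by norm_num : (0:ℝ) ≤ 4/3)
      nlinarith [sq_nonneg x]
    · have h1 : x ^ ((4:ℝ)/3) ≤ x ^ (2:ℝ) :=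
        Real.rpow_le_rpow_of_exponent_le h (by norm_num)
      rw [Real.rpow_two] at h1
      nlinarith
  have hx2 : x^2 * Real.exp (-x^2) ≤ 12 * Real.exp (-x) := by
    have h1 : x^2 * Real.exp (-x^2) ≤ 4 * Real.exp x * Real.exp (-x^2) :=
      mul_le_mul_of_nonneg_right (sq_le_exp hx) (Real.exp_pos _).le
    have h2 : Real.exp x * Real.exp (-x^2) = Real.exp (x - x^2) := by
      rw [← Real.exp_add]; ring_nf
    have h3 : Real.exp (x - x^2) ≤ Real.exp (1 + -x) := by
      apply Real.exp_le_exp.mpr; nlinarith [sq_nonneg (x-1)]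
    have h4 : Real.exp (1 + -x) = Real.exp 1 * Real.exp (-x) := Real.exp_add 1 (-x)
    have h5 := Real.exp_one_lt_d9
    nlinarith [Real.exp_pos (-x), Real.exp_pos (-x^2), Real.exp_pos x]
  have hb3 := expB3 hx
  have h6 : x ^ ((4:ℝ)/3) * Real.exp (-x^2) ≤ (1 + x^2) * Real.exp (-x^2) :=
    mul_le_mul_of_nonneg_right hr (Real.exp_pos _).le
  nlinarith [Real.exp_pos (-x^2)]

lemma nat_sum_bound {b K : ℝ} (hb : 0 < b) {f : ℕ → ℝ}
    (hnn : ∀ n, 0 ≤ f n) (hf : ∀ n : ℕ, f n ≤ K * Real.exp (-(b * n))) :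
    Summable f ∧ (b ≤ 1 → ∑' n, f n ≤ K * (2 / b)) := by
  have hK : 0 ≤ K := by
    have h0 := hf 0
    have h1 := hnn 0
    simp at h0
    linarith
  have hr0 : (0:ℝ) ≤ Real.exp (-b) := (Real.exp_pos _).le
  have hr1 : Real.exp (-b) < 1 := by
    rw [Real.exp_lt_one_iff]; linarith
  have heq : ∀ n : ℕ, K * Real.exp (-b) ^ n = K * Real.exp (-(b * n)) := by
    intro n
    rw [← Real.exp_nat_mul]
    ring_nf
  have hgeo : Summable (fun n : ℕ => K * Real.exp (-(b * n))) := by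
    have := (summable_geometric_of_lt_one hr0 hr1).mul_left K
    exact this.congr heq
  have hsum : Summable f := hgeo.of_nonneg_of_le hnn hf
  refine ⟨hsum, fun hb1 => ?_⟩
  have t1 : ∑' n, f n ≤ ∑' n : ℕ, K * Real.exp (-(b * n)) := Summable.tsum_le_tsum hf hsum hgeo
  have t2 : ∑' n : ℕ, K * Real.exp (-(b * n)) = K * (1 - Real.exp (-b))⁻¹ := by
    rw [← tsum_congr heq, tsum_mul_left, tsum_geometric_of_lt_one hr0 hr1]
  have hebb : Real.exp (-b) ≤ 1 / (1 + b) := by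
    have h1 : b + 1 ≤ Real.exp b := Real.add_one_le_exp b
    rw [Real.exp_neg, one_div]
    exact inv_anti₀ (by linarith) (by linarith)
  have hlow : b / 2 ≤ 1 - Real.exp (-b) := by
    have hpos : (0:ℝ) < 1 + b := by linarith
    have : 1 / (1 + b) ≤ 1 - b/2 := by
      rw [div_le_iff₀ hpos]; nlinarith
    linarith
  have hinv : (1 - Real.exp (-b))⁻¹ ≤ 2 / b := by
    have := inv_anti₀ (by linarith : (0:ℝ) < b/2) hlow
    calc (1 - Real.exp (-b))⁻¹ ≤ (b/2)⁻¹ := this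
      _ = 2/b := by rw [inv_div]
  calc ∑' n, f n ≤ K * (1 - Real.exp (-b))⁻¹ := by rw [← t2]; exact t1
    _ ≤ K * (2 / b) := mul_le_mul_of_nonneg_left hinv hK

lemma int_sum_bound {H : ℕ → ℝ} {h : ℤ → ℝ} (hnn : ∀ n, 0 ≤ h n)
    (hcomp : ∀ n : ℤ, h n ≤ H n.natAbs) (hHnn : ∀ n, 0 ≤ H n) (hH : Summable H) :
    Summable h ∧ ∑' n : ℤ, h n ≤ 2 * ∑' n : ℕ, H n := by
  have h1 : Summable (fun n : ℕ => H ((n : ℤ)).natAbs) := by simpa using hH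
  have h2 : Summable (fun n : ℕ => H ((-(n:ℤ))).natAbs) := by simpa using hH
  have hH' : Summable (fun n : ℤ => H n.natAbs) := Summable.of_nat_of_neg h1 h2
  have hsum : Summable h := hH'.of_nonneg_of_le hnn hcomp
  refine ⟨hsum, ?_⟩
  have t1 : ∑' n : ℤ, h n ≤ ∑' n : ℤ, H n.natAbs := Summable.tsum_le_tsum hcomp hsum hH'
  have h3 : Summable (fun n : ℕ => H ((-((n:ℤ)+1))).natAbs) := by
    have : ∀ n : ℕ, ((-((n:ℤ)+1))).natAbs = n + 1 := by intro n; simp; omega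
    simp only [this]
    exact (summable_nat_add_iff 1).mpr hH
  have t2 : ∑' n : ℤ, H n.natAbs
      = (∑' n : ℕ, H ((n:ℤ)).natAbs) + ∑' n : ℕ, H ((-((n:ℤ)+1))).natAbs :=
    tsum_of_nat_of_neg_add_one h1 h3
  have t3 : (∑' n : ℕ, H ((n:ℤ)).natAbs) = ∑' n : ℕ, H n := by simp
  have t4 : (∑' n : ℕ, H ((-((n:ℤ)+1))).natAbs) = ∑' n : ℕ, H (n+1) := by
    have e : ∀ n : ℕ, ((-((n:ℤ)+1))).natAbs = n + 1 := by intro n; simp; omega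
    simp only [e]
  have t5 : ∑' n : ℕ, H (n+1) ≤ ∑' n, H n := by
    have := Summable.tsum_eq_zero_add hH
    have h0 := hHnn 0
    linarith
  rw [t2, t3, t4] at t1
  linarith

lemma one_le_two_pi : (1:ℝ) ≤ 2*π := by nlinarith [pi_gt_three]

lemma absN (n : ℤ) : |2*π*(n:ℝ)| = 2*π*(n.natAbs:ℝ) := by
  rw [abs_mul, abs_of_pos (by positivity : (0:ℝ) < 2*π)]
  congr 1
  simp [Nat.cast_natAbs]

lemma natAbs_le_abs2pi (n : ℤ) : ((n.natAbs:ℝ)) ≤ |2*π*(n:ℝ)| := by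
  rw [absN]
  nlinarith [pi_gt_three, Nat.cast_nonneg (α := ℝ) n.natAbs]

lemma sq_cast (n : ℤ) : ((n:ℝ))^2 = ((n.natAbs:ℝ))^2 := by
  have : ((n.natAbs:ℝ)) = |(n:ℝ)| := by simp [Nat.cast_natAbs]
  rw [this, sq_abs]

section OneD
variable {T : ℝ}

lemma sum_f1 (hT : 0 < T) :
    Summable (fun n : ℤ => Real.exp (-T * |2*π*(n:ℝ)|^3) * (2*π*(n:ℝ))^2) ∧
    (T ≤ 1 → (∑' n : ℤ, Real.exp (-T * |2*π*(n:ℝ)|^3) * (2*π*(n:ℝ))^2) ≤ 5760 / T) := by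
  set b := T ^ ((1:ℝ)/3) with hbdef
  have hb : 0 < b := Real.rpow_pos_of_pos hT _
  have hb3 : b^3 = T := by
    rw [hbdef, ← Real.rpow_natCast (T ^ ((1:ℝ)/3)) 3, ← Real.rpow_mul hT.le]
    norm_num
  set H : ℕ → ℝ := fun n => 40 * ((n:ℝ)^2 * Real.exp (-T * (n:ℝ)^3)) with hHdef
  have hHnn : ∀ n, 0 ≤ H n := fun n => by positivity
  have hHf : ∀ n : ℕ, H n ≤ (1440 / b^2) * Real.exp (-(b * n)) := by
    intro n
    have hbn : (0:ℝ) ≤ b * n := by positivity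
    have key := expB2 hbn
    have e1 : (b*(n:ℝ))^3 = T * (n:ℝ)^3 := by rw [mul_pow, hb3]
    have e2 : (b*(n:ℝ))^2 = b^2 * (n:ℝ)^2 := by ring
    rw [e1, e2] at key
    have hb2 : (0:ℝ) < b^2 := by positivity
    show 40 * ((n:ℝ)^2 * Real.exp (-T * (n:ℝ)^3)) ≤ 1440 / b ^ 2 * Real.exp (-(b * n))
    rw [neg_mul T]
    rw [div_mul_eq_mul_div, le_div_iff₀ hb2]
    nlinarith [Real.exp_pos (-(b*(n:ℝ))), Real.exp_pos (-(T*(n:ℝ)^3))]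
  obtain ⟨hHsum, hHbound⟩ := nat_sum_bound hb hHnn hHf
  have hcomp : ∀ n : ℤ, Real.exp (-T * |2*π*(n:ℝ)|^3) * (2*π*(n:ℝ))^2 ≤ H n.natAbs := by
    intro n
    set N : ℝ := (n.natAbs : ℝ) with hN
    have hN0 : 0 ≤ N := Nat.cast_nonneg _
    have habs := natAbs_le_abs2pi n
    have hcube : N^3 ≤ |2*π*(n:ℝ)|^3 := by
      apply pow_le_pow_left₀ hN0 habs
    have hexp : Real.exp (-T * |2*π*(n:ℝ)|^3) ≤ Real.exp (-T * N^3) := by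
      apply Real.exp_le_exp.mpr
      nlinarith
    have hw : (2*π*(n:ℝ))^2 ≤ 40 * N^2 := by
      have : (2*π*(n:ℝ))^2 = (2*π)^2 * ((n:ℝ))^2 := by ring
      rw [this, sq_cast n, ← hN]
      have hpi : (2*π)^2 ≤ 40 := by nlinarith [Real.pi_lt_d2, Real.pi_gt_three]
      nlinarith [hpi, sq_nonneg N]
    calc Real.exp (-T * |2*π*(n:ℝ)|^3) * (2*π*(n:ℝ))^2
        ≤ Real.exp (-T * N^3) * (40 * N^2) :=
          mul_le_mul hexp hw (sq_nonneg _) (Real.exp_pos _).le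
      _ = H n.natAbs := by rw [hHdef]; ring
  have hnn : ∀ n : ℤ, 0 ≤ Real.exp (-T * |2*π*(n:ℝ)|^3) * (2*π*(n:ℝ))^2 := by
    intro n; positivity
  obtain ⟨hs, hb'⟩ := int_sum_bound hnn hcomp hHnn hHsum
  refine ⟨hs, fun hT1 => ?_⟩
  have hble : b ≤ 1 := Real.rpow_le_one hT.le hT1 (by norm_num)
  have := hHbound hble
  have hfin : (1440 / b^2) * (2 / b) = 2880 / T := by
    rw [← hb3]; field_simp; ring
  rw [hfin] at this
  calc (∑' n : ℤ, Real.exp (-T * |2*π*(n:ℝ)|^3) * (2*π*(n:ℝ))^2) ≤ 2 * ∑' n, H n := hb'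
    _ ≤ 2 * (2880 / T) := by linarith
    _ = 5760 / T := by ring

lemma sum_g1 (hT : 0 < T) :
    Summable (fun n : ℤ => Real.exp (-T * (2*π*(n:ℝ))^2)) ∧
    (T ≤ 1 → (∑' n : ℤ, Real.exp (-T * (2*π*(n:ℝ))^2)) ≤ 12 / T ^ ((1:ℝ)/2)) := by
  set c := T ^ ((1:ℝ)/2) with hcdef
  have hc : 0 < c := Real.rpow_pos_of_pos hT _
  have hc2 : c^2 = T := by
    rw [hcdef, ← Real.rpow_natCast (T ^ ((1:ℝ)/2)) 2, ← Real.rpow_mul hT.le]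
    norm_num
  set H : ℕ → ℝ := fun n => Real.exp (-T * (n:ℝ)^2) with hHdef
  have hHnn : ∀ n, 0 ≤ H n := fun n => (Real.exp_pos _).le
  have hHf : ∀ n : ℕ, H n ≤ 3 * Real.exp (-(c * n)) := by
    intro n
    have hcn : (0:ℝ) ≤ c * n := by positivity
    have key := expB3 hcn
    have e1 : (c*(n:ℝ))^2 = T * (n:ℝ)^2 := by rw [mul_pow, hc2]
    rw [e1] at key
    show Real.exp (-T * (n:ℝ)^2) ≤ 3 * Real.exp (-(c * n))
    rw [neg_mul T]
    exact key
  obtain ⟨hHsum, hHbound⟩ := nat_sum_bound hc hHnn hHf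
  have hcomp : ∀ n : ℤ, Real.exp (-T * (2*π*(n:ℝ))^2) ≤ H n.natAbs := by
    intro n
    set N : ℝ := (n.natAbs : ℝ) with hN
    have hsq : N^2 ≤ (2*π*(n:ℝ))^2 := by
      have : (2*π*(n:ℝ))^2 = (2*π)^2 * ((n:ℝ))^2 := by ring
      rw [this, sq_cast n, ← hN]
      have h1 : (1:ℝ) ≤ (2*π)^2 := by nlinarith [Real.pi_gt_three]
      nlinarith [h1, sq_nonneg N]
    show Real.exp (-T * (2*π*(n:ℝ))^2) ≤ Real.exp (-T * N^2)
    apply Real.exp_le_exp.mpr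
    nlinarith
  have hnn : ∀ n : ℤ, 0 ≤ Real.exp (-T * (2*π*(n:ℝ))^2) := fun n => (Real.exp_pos _).le
  obtain ⟨hs, hb'⟩ := int_sum_bound hnn hcomp hHnn hHsum
  refine ⟨hs, fun hT1 => ?_⟩
  have hcle : c ≤ 1 := Real.rpow_le_one hT.le hT1 (by norm_num)
  have := hHbound hcle
  calc (∑' n : ℤ, Real.exp (-T * (2*π*(n:ℝ))^2)) ≤ 2 * ∑' n, H n := hb'
    _ ≤ 2 * (3 * (2 / c)) := by linarith
    _ = 12 / c := by ring

lemma sum_f2 (hT : 0 < T) :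
    Summable (fun n : ℤ => Real.exp (-T * |2*π*(n:ℝ)|^3)) ∧
    (T ≤ 1 → (∑' n : ℤ, Real.exp (-T * |2*π*(n:ℝ)|^3)) ≤ 12 / T ^ ((1:ℝ)/3)) := by
  set b := T ^ ((1:ℝ)/3) with hbdef
  have hb : 0 < b := Real.rpow_pos_of_pos hT _
  have hb3 : b^3 = T := by
    rw [hbdef, ← Real.rpow_natCast (T ^ ((1:ℝ)/3)) 3, ← Real.rpow_mul hT.le]
    norm_num
  set H : ℕ → ℝ := fun n => Real.exp (-T * (n:ℝ)^3) with hHdef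
  have hHnn : ∀ n, 0 ≤ H n := fun n => (Real.exp_pos _).le
  have hHf : ∀ n : ℕ, H n ≤ 3 * Real.exp (-(b * n)) := by
    intro n
    have hbn : (0:ℝ) ≤ b * n := by positivity
    have key := expB1 hbn
    have e1 : (b*(n:ℝ))^3 = T * (n:ℝ)^3 := by rw [mul_pow, hb3]
    rw [e1] at key
    show Real.exp (-T * (n:ℝ)^3) ≤ 3 * Real.exp (-(b * n))
    rw [neg_mul T]
    exact key
  obtain ⟨hHsum, hHbound⟩ := nat_sum_bound hb hHnn hHf
  have hcomp : ∀ n : ℤ, Real.exp (-T * |2*π*(n:ℝ)|^3) ≤ H n.natAbs := by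
    intro n
    set N : ℝ := (n.natAbs : ℝ) with hN
    have hN0 : 0 ≤ N := Nat.cast_nonneg _
    have hcube : N^3 ≤ |2*π*(n:ℝ)|^3 := pow_le_pow_left₀ hN0 (natAbs_le_abs2pi n) 3
    show Real.exp (-T * |2*π*(n:ℝ)|^3) ≤ Real.exp (-T * N^3)
    apply Real.exp_le_exp.mpr
    nlinarith
  have hnn : ∀ n : ℤ, 0 ≤ Real.exp (-T * |2*π*(n:ℝ)|^3) := fun n => (Real.exp_pos _).le
  obtain ⟨hs, hb'⟩ := int_sum_bound hnn hcomp hHnn hHsum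
  refine ⟨hs, fun hT1 => ?_⟩
  have hble : b ≤ 1 := Real.rpow_le_one hT.le hT1 (by norm_num)
  have := hHbound hble
  calc (∑' n : ℤ, Real.exp (-T * |2*π*(n:ℝ)|^3)) ≤ 2 * ∑' n, H n := hb'
    _ ≤ 2 * (3 * (2 / b)) := by linarith
    _ = 12 / b := by ring

lemma sum_g2 (hT : 0 < T) :
    Summable (fun n : ℤ => |2*π*(n:ℝ)| ^ ((4:ℝ)/3) * Real.exp (-T * (2*π*(n:ℝ))^2)) ∧
    (T ≤ 1 → (∑' n : ℤ, |2*π*(n:ℝ)| ^ ((4:ℝ)/3) * Real.exp (-T * (2*π*(n:ℝ))^2))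
      ≤ 2940 / (T ^ ((2:ℝ)/3) * T ^ ((1:ℝ)/2))) := by
  set c := T ^ ((1:ℝ)/2) with hcdef
  have hc : 0 < c := Real.rpow_pos_of_pos hT _
  have hc2 : c^2 = T := by
    rw [hcdef, ← Real.rpow_natCast (T ^ ((1:ℝ)/2)) 2, ← Real.rpow_mul hT.le]
    norm_num
  have hc43 : c ^ ((4:ℝ)/3) = T ^ ((2:ℝ)/3) := by
    rw [hcdef, ← Real.rpow_mul hT.le]
    norm_num
  have hc43pos : 0 < c ^ ((4:ℝ)/3) := Real.rpow_pos_of_pos hc _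
  set H : ℕ → ℝ := fun n => 49 * ((n:ℝ) ^ ((4:ℝ)/3) * Real.exp (-T * (n:ℝ)^2)) with hHdef
  have hHnn : ∀ n, 0 ≤ H n := fun n => by positivity
  have hHf : ∀ n : ℕ, H n ≤ (735 / c ^ ((4:ℝ)/3)) * Real.exp (-(c * n)) := by
    intro n
    have hcn : (0:ℝ) ≤ c * n := by positivity
    have key := expB4 hcn
    have e1 : (c*(n:ℝ))^2 = T * (n:ℝ)^2 := by rw [mul_pow, hc2]
    have e2 : (c*(n:ℝ)) ^ ((4:ℝ)/3) = c ^ ((4:ℝ)/3) * (n:ℝ) ^ ((4:ℝ)/3) :=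
      Real.mul_rpow hc.le (Nat.cast_nonneg n)
    rw [e1, e2] at key
    show 49 * ((n:ℝ) ^ ((4:ℝ)/3) * Real.exp (-T * (n:ℝ)^2)) ≤ (735 / c ^ ((4:ℝ)/3)) * Real.exp (-(c * n))
    rw [neg_mul T]
    rw [div_mul_eq_mul_div, le_div_iff₀ hc43pos]
    nlinarith [Real.exp_pos (-(c*(n:ℝ))), Real.exp_pos (-(T*(n:ℝ)^2))]
  obtain ⟨hHsum, hHbound⟩ := nat_sum_bound hc hHnn hHf
  have hcomp : ∀ n : ℤ, |2*π*(n:ℝ)| ^ ((4:ℝ)/3) * Real.exp (-T * (2*π*(n:ℝ))^2) ≤ H n.natAbs := by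
    intro n
    set N : ℝ := (n.natAbs : ℝ) with hN
    have hN0 : 0 ≤ N := Nat.cast_nonneg _
    have habs : |2*π*(n:ℝ)| = 2*π*N := absN n
    have hw : |2*π*(n:ℝ)| ^ ((4:ℝ)/3) ≤ 49 * N ^ ((4:ℝ)/3) := by
      rw [habs, Real.mul_rpow (by positivity : (0:ℝ) ≤ 2*π) hN0]
      have h1 : (2*π) ^ ((4:ℝ)/3) ≤ (2*π) ^ (2:ℝ) :=
        Real.rpow_le_rpow_of_exponent_le one_le_two_pi (by norm_num)
      rw [Real.rpow_two] at h1
      have h2 : (2*π)^2 ≤ 49 := by nlinarith [Real.pi_lt_d2, Real.pi_gt_three]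
      have h3 : (0:ℝ) ≤ N ^ ((4:ℝ)/3) := Real.rpow_nonneg hN0 _
      nlinarith
    have hsq : N^2 ≤ (2*π*(n:ℝ))^2 := by
      have : (2*π*(n:ℝ))^2 = (2*π)^2 * ((n:ℝ))^2 := by ring
      rw [this, sq_cast n, ← hN]
      have h1 : (1:ℝ) ≤ (2*π)^2 := by nlinarith [Real.pi_gt_three]
      nlinarith [h1, sq_nonneg N]
    have hexp : Real.exp (-T * (2*π*(n:ℝ))^2) ≤ Real.exp (-T * N^2) := by
      apply Real.exp_le_exp.mpr
      nlinarith
    calc |2*π*(n:ℝ)| ^ ((4:ℝ)/3) * Real.exp (-T * (2*π*(n:ℝ))^2)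
        ≤ (49 * N ^ ((4:ℝ)/3)) * Real.exp (-T * N^2) :=
          mul_le_mul hw hexp (Real.exp_pos _).le (by positivity)
      _ = H n.natAbs := by rw [hHdef]; ring
  have hnn : ∀ n : ℤ, 0 ≤ |2*π*(n:ℝ)| ^ ((4:ℝ)/3) * Real.exp (-T * (2*π*(n:ℝ))^2) := by
    intro n; positivity
  obtain ⟨hs, hb'⟩ := int_sum_bound hnn hcomp hHnn hHsum
  refine ⟨hs, fun hT1 => ?_⟩
  have hcle : c ≤ 1 := Real.rpow_le_one hT.le hT1 (by norm_num)
  have := hHbound hcle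
  have hfin : (735 / c ^ ((4:ℝ)/3)) * (2 / c) = 1470 / (T ^ ((2:ℝ)/3) * c) := by
    rw [← hc43]; field_simp; ring
  rw [hfin] at this
  calc (∑' n : ℤ, |2*π*(n:ℝ)| ^ ((4:ℝ)/3) * Real.exp (-T * (2*π*(n:ℝ))^2))
      ≤ 2 * ∑' n, H n := hb'
    _ ≤ 2 * (1470 / (T ^ ((2:ℝ)/3) * c)) := by linarith
    _ = 2940 / (T ^ ((2:ℝ)/3) * c) := by ring

end OneD


lemma term_bound {T : ℝ} (hT : 0 ≤ T) (m : ℤ × ℤ) :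
    Real.exp (-T * latticeDist m ^ 3) * latticeDist m ^ 2 ≤
      2 * ((Real.exp (-T * |2*π*((m.1:ℤ):ℝ)|^3) * (2*π*((m.1:ℤ):ℝ))^2) * Real.exp (-T * (2*π*((m.2:ℤ):ℝ))^2))
    + 2 * (Real.exp (-T * |2*π*((m.1:ℤ):ℝ)|^3) * (|2*π*((m.2:ℤ):ℝ)| ^ ((4:ℝ)/3) * Real.exp (-T * (2*π*((m.2:ℤ):ℝ))^2))) := by
  set x := |2*π*((m.1:ℤ):ℝ)| with hxdef
  set y := |2*π*((m.2:ℤ):ℝ)| with hydef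
  set z := y ^ ((2:ℝ)/3) with hzdef
  have hx : 0 ≤ x := abs_nonneg _
  have hy : 0 ≤ y := abs_nonneg _
  have hz : 0 ≤ z := Real.rpow_nonneg hy _
  have hd : latticeDist m = x + z := rfl
  have key1 : z^3 = (2*π*((m.2:ℤ):ℝ))^2 := by
    rw [hzdef, ← Real.rpow_natCast (y ^ ((2:ℝ)/3)) 3, ← Real.rpow_mul hy]
    norm_num [Real.rpow_two]
    rw [hydef, sq_abs]
  have key2 : z^2 = y ^ ((4:ℝ)/3) := by
    rw [hzdef, ← Real.rpow_natCast (y ^ ((2:ℝ)/3)) 2, ← Real.rpow_mul hy]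
    norm_num
  have hcube : x^3 + z^3 ≤ (x+z)^3 := by
    nlinarith [mul_nonneg (mul_nonneg hx hz) (add_nonneg hx hz)]
  have hexp : Real.exp (-T * (x+z)^3) ≤
      Real.exp (-T * x^3) * Real.exp (-T * (2*π*((m.2:ℤ):ℝ))^2) := by
    rw [← Real.exp_add]
    apply Real.exp_le_exp.mpr
    rw [← key1]
    nlinarith [mul_le_mul_of_nonneg_left hcube hT]
  have hw : (x+z)^2 ≤ 2*(2*π*((m.1:ℤ):ℝ))^2 + 2*(y ^ ((4:ℝ)/3)) := by
    rw [← key2]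
    have : (2*π*((m.1:ℤ):ℝ))^2 = x^2 := (sq_abs _).symm
    rw [this]
    nlinarith [sq_nonneg (x-z)]
  have hmain : Real.exp (-T * latticeDist m ^ 3) * latticeDist m ^ 2 ≤
      (Real.exp (-T * x^3) * Real.exp (-T * (2*π*((m.2:ℤ):ℝ))^2)) *
      (2*(2*π*((m.1:ℤ):ℝ))^2 + 2*(y ^ ((4:ℝ)/3))) := by
    rw [hd]
    exact mul_le_mul hexp hw (sq_nonneg _) (by positivity)
  calc Real.exp (-T * latticeDist m ^ 3) * latticeDist m ^ 2
      ≤ (Real.exp (-T * x^3) * Real.exp (-T * (2*π*((m.2:ℤ):ℝ))^2)) *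
        (2*(2*π*((m.1:ℤ):ℝ))^2 + 2*(y ^ ((4:ℝ)/3))) := hmain
    _ = 2 * ((Real.exp (-T * x^3) * (2*π*((m.1:ℤ):ℝ))^2) * Real.exp (-T * (2*π*((m.2:ℤ):ℝ))^2))
      + 2 * (Real.exp (-T * x^3) * (y ^ ((4:ℝ)/3) * Real.exp (-T * (2*π*((m.2:ℤ):ℝ))^2))) := by
        ring

lemma latticeDist_nonneg (m : ℤ × ℤ) : 0 ≤ latticeDist m := by
  unfold latticeDist
  positivity

lemma one_le_latticeDist {m : ℤ × ℤ} (hm : m ≠ 0) : 1 ≤ latticeDist m := by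
  have h2p : (1:ℝ) ≤ 2*π := one_le_two_pi
  have hcases : m.1 ≠ 0 ∨ m.2 ≠ 0 := by
    by_contra h
    push_neg at h
    exact hm (Prod.ext h.1 h.2)
  unfold latticeDist
  rcases hcases with h | h
  · have h1 : (1:ℝ) ≤ |(m.1:ℝ)| := by
      have := Int.one_le_abs h
      calc (1:ℝ) = ((1:ℤ):ℝ) := by norm_num
        _ ≤ ((|m.1| : ℤ):ℝ) := by exact_mod_cast this
        _ = |(m.1:ℝ)| := by push_cast; ring
    have : (1:ℝ) ≤ |2*π*(m.1:ℝ)| := by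
      rw [abs_mul, abs_of_pos (by positivity : (0:ℝ) < 2*π)]
      nlinarith
    have hr : (0:ℝ) ≤ |2*π*(m.2:ℝ)| ^ ((2:ℝ)/3) := Real.rpow_nonneg (abs_nonneg _) _
    linarith
  · have h1 : (1:ℝ) ≤ |(m.2:ℝ)| := by
      have := Int.one_le_abs h
      calc (1:ℝ) = ((1:ℤ):ℝ) := by norm_num
        _ ≤ ((|m.2| : ℤ):ℝ) := by exact_mod_cast this
        _ = |(m.2:ℝ)| := by push_cast; ring
    have h2 : (1:ℝ) ≤ |2*π*(m.2:ℝ)| := by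
      rw [abs_mul, abs_of_pos (by positivity : (0:ℝ) < 2*π)]
      nlinarith
    have := Real.one_le_rpow h2 (by norm_num : (0:ℝ) ≤ 2/3)
    have hr : (0:ℝ) ≤ |2*π*(m.1:ℝ)| := abs_nonneg _
    linarith

lemma main_est (T : ℝ) (hT : 0 < T) :
    Summable (fun m : {m : ℤ × ℤ // m ≠ 0} =>
      Real.exp (-T * latticeDist m ^ 3) * latticeDist m ^ 2) ∧
    (T ≤ 1 → (∑' m : {m : ℤ × ℤ // m ≠ 0},
        Real.exp (-T * latticeDist m ^ 3) * latticeDist m ^ 2)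
      ≤ 208800 * T ^ (-(3:ℝ)/2)) := by
  set f₁ : ℤ → ℝ := fun n => Real.exp (-T * |2*π*(n:ℝ)|^3) * (2*π*(n:ℝ))^2 with hf1
  set g₁ : ℤ → ℝ := fun n => Real.exp (-T * (2*π*(n:ℝ))^2) with hg1
  set f₂ : ℤ → ℝ := fun n => Real.exp (-T * |2*π*(n:ℝ)|^3) with hf2
  set g₂ : ℤ → ℝ := fun n => |2*π*(n:ℝ)| ^ ((4:ℝ)/3) * Real.exp (-T * (2*π*(n:ℝ))^2) with hg2
  obtain ⟨s1, b1⟩ := sum_f1 hT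
  obtain ⟨s2, b2⟩ := sum_g1 hT
  obtain ⟨s3, b3⟩ := sum_f2 hT
  obtain ⟨s4, b4⟩ := sum_g2 hT
  have nn1 : ∀ n, 0 ≤ f₁ n := fun n => by rw [hf1]; positivity
  have nn2 : ∀ n, 0 ≤ g₁ n := fun n => (Real.exp_pos _).le
  have nn3 : ∀ n, 0 ≤ f₂ n := fun n => (Real.exp_pos _).le
  have nn4 : ∀ n, 0 ≤ g₂ n := fun n => by rw [hg2]; positivity
  have P1 : Summable (fun m : ℤ × ℤ => f₁ m.1 * g₁ m.2) :=
    s1.mul_of_nonneg s2 nn1 nn2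
  have P2 : Summable (fun m : ℤ × ℤ => f₂ m.1 * g₂ m.2) :=
    s3.mul_of_nonneg s4 nn3 nn4
  set F : ℤ × ℤ → ℝ := fun m => 2 * (f₁ m.1 * g₁ m.2) + 2 * (f₂ m.1 * g₂ m.2) with hF
  have SF : Summable F := (P1.mul_left 2).add (P2.mul_left 2)
  have hFnn : ∀ m, 0 ≤ F m := fun m => by
    have := mul_nonneg (nn1 m.1) (nn2 m.2)
    have := mul_nonneg (nn3 m.1) (nn4 m.2)
    rw [hF]; dsimp only; linarith
  have hle : ∀ m : {m : ℤ × ℤ // m ≠ 0},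
      Real.exp (-T * latticeDist m ^ 3) * latticeDist m ^ 2 ≤ F m.val :=
    fun m => term_bound hT.le m.val
  have horignn : ∀ m : {m : ℤ × ℤ // m ≠ 0},
      0 ≤ Real.exp (-T * latticeDist m ^ 3) * latticeDist m ^ 2 := fun m => by
    have := latticeDist_nonneg m.val
    positivity
  have hsub : Summable (fun m : {m : ℤ × ℤ // m ≠ 0} => F m.val) :=
    SF.subtype {m : ℤ × ℤ | m ≠ 0}
  have horig : Summable (fun m : {m : ℤ × ℤ // m ≠ 0} =>
      Real.exp (-T * latticeDist m ^ 3) * latticeDist m ^ 2) :=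
    hsub.of_nonneg_of_le horignn hle
  refine ⟨horig, fun hT1 => ?_⟩
  -- bound the tsum
  have t0 : (∑' m : {m : ℤ × ℤ // m ≠ 0},
      Real.exp (-T * latticeDist m ^ 3) * latticeDist m ^ 2) ≤ ∑' m, F m :=
    Summable.tsum_le_tsum_of_inj Subtype.val Subtype.val_injective
      (fun c _ => hFnn c) hle horig SF
  have prod1 : (∑' m : ℤ × ℤ, f₁ m.1 * g₁ m.2) = (∑' n, f₁ n) * (∑' n, g₁ n) := by
    rw [Summable.tsum_prod' P1 (fun b => (s2.mul_left (f₁ b)))]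
    simp_rw [tsum_mul_left]
    rw [tsum_mul_right]
  have prod2 : (∑' m : ℤ × ℤ, f₂ m.1 * g₂ m.2) = (∑' n, f₂ n) * (∑' n, g₂ n) := by
    rw [Summable.tsum_prod' P2 (fun b => (s4.mul_left (f₂ b)))]
    simp_rw [tsum_mul_left]
    rw [tsum_mul_right]
  have tF : (∑' m, F m) = 2 * ((∑' n, f₁ n) * (∑' n, g₁ n))
      + 2 * ((∑' n, f₂ n) * (∑' n, g₂ n)) := by
    rw [hF]
    rw [Summable.tsum_add (P1.mul_left 2) (P2.mul_left 2), tsum_mul_left, tsum_mul_left,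
      prod1, prod2]
  -- numeric part
  have tsnn1 : 0 ≤ ∑' n, f₁ n := tsum_nonneg nn1
  have tsnn2 : 0 ≤ ∑' n, g₁ n := tsum_nonneg nn2
  have tsnn3 : 0 ≤ ∑' n, f₂ n := tsum_nonneg nn3
  have tsnn4 : 0 ≤ ∑' n, g₂ n := tsum_nonneg nn4
  have hq1 : (∑' n, f₁ n) * (∑' n, g₁ n) ≤ (5760 / T) * (12 / T ^ ((1:ℝ)/2)) :=
    mul_le_mul (b1 hT1) (b2 hT1) tsnn2 (by positivity)
  have hq2 : (∑' n, f₂ n) * (∑' n, g₂ n)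
      ≤ (12 / T ^ ((1:ℝ)/3)) * (2940 / (T ^ ((2:ℝ)/3) * T ^ ((1:ℝ)/2))) :=
    mul_le_mul (b3 hT1) (b4 hT1) tsnn4 (by positivity)
  have e1 : T * T ^ ((1:ℝ)/2) = T ^ ((3:ℝ)/2) := by
    nth_rewrite 1 [← Real.rpow_one T]
    rw [← Real.rpow_add hT]
    norm_num
  have e2 : T ^ ((1:ℝ)/3) * (T ^ ((2:ℝ)/3) * T ^ ((1:ℝ)/2)) = T ^ ((3:ℝ)/2) := by
    rw [← Real.rpow_add hT, ← Real.rpow_add hT]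
    norm_num
  have hrp : (0:ℝ) < T ^ ((3:ℝ)/2) := Real.rpow_pos_of_pos hT _
  have hneg : T ^ (-(3:ℝ)/2) = (T ^ ((3:ℝ)/2))⁻¹ := by
    rw [neg_div, Real.rpow_neg hT.le]
  calc (∑' m : {m : ℤ × ℤ // m ≠ 0},
      Real.exp (-T * latticeDist m ^ 3) * latticeDist m ^ 2)
      ≤ ∑' m, F m := t0
    _ = 2 * ((∑' n, f₁ n) * (∑' n, g₁ n)) + 2 * ((∑' n, f₂ n) * (∑' n, g₂ n)) := tF
    _ ≤ 2 * ((5760 / T) * (12 / T ^ ((1:ℝ)/2)))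
        + 2 * ((12 / T ^ ((1:ℝ)/3)) * (2940 / (T ^ ((2:ℝ)/3) * T ^ ((1:ℝ)/2)))) := by
        linarith
    _ = 138240 / (T * T ^ ((1:ℝ)/2))
        + 70560 / (T ^ ((1:ℝ)/3) * (T ^ ((2:ℝ)/3) * T ^ ((1:ℝ)/2))) := by
        have p1 : (0:ℝ) < T ^ ((1:ℝ)/2) := Real.rpow_pos_of_pos hT _
        have p2 : (0:ℝ) < T ^ ((1:ℝ)/3) := Real.rpow_pos_of_pos hT _
        have p3 : (0:ℝ) < T ^ ((2:ℝ)/3) := Real.rpow_pos_of_pos hT _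
        field_simp
        ring
    _ = 208800 * T ^ (-(3:ℝ)/2) := by
        rw [e1, e2, hneg]
        field_simp
        ring

/-- Weighted heat-kernel sum bound with weight d(k,0)^2, bounded by C T^(-3/2). -/
theorem lattice_exp_sum_bound_weighted :
    ∃ C : ℝ, 0 < C ∧ ∀ T : ℝ, 0 < T →
      Summable (fun m : {m : ℤ × ℤ // m ≠ 0} =>
        Real.exp (-T * latticeDist m ^ 3) * latticeDist m ^ 2) ∧
      (∑' m : {m : ℤ × ℤ // m ≠ 0},
          Real.exp (-T * latticeDist m ^ 3) * latticeDist m ^ 2)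
        ≤ C * T ^ (-(3 : ℝ) / 2) := by
  refine ⟨16912800, by norm_num, fun T hT => ?_⟩
  obtain ⟨hsum, hbd⟩ := main_est T hT
  refine ⟨hsum, ?_⟩
  have hrp : (0:ℝ) < T ^ (-(3:ℝ)/2) := Real.rpow_pos_of_pos hT _
  rcases le_or_gt T 1 with hT1 | hT1
  · have := hbd hT1
    nlinarith
  · -- large T
    obtain ⟨hsum1, hbd1⟩ := main_est 1 one_pos
    have hb1 := hbd1 le_rfl
    rw [Real.one_rpow] at hb1
    rw [mul_one] at hb1
    have hterm : ∀ m : {m : ℤ × ℤ // m ≠ 0},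
        Real.exp (-T * latticeDist m ^ 3) * latticeDist m ^ 2 ≤
        Real.exp (-(T-1)) * (Real.exp (-1 * latticeDist m ^ 3) * latticeDist m ^ 2) := by
      intro m
      have hd := one_le_latticeDist m.prop
      have hd3 : 1 ≤ latticeDist m.val ^ 3 := one_le_pow₀ hd
      have key : Real.exp (-T * latticeDist m.val ^ 3) ≤
          Real.exp (-(T-1)) * Real.exp (-1 * latticeDist m.val ^ 3) := by
        rw [← Real.exp_add]
        apply Real.exp_le_exp.mpr
        nlinarith
      calc Real.exp (-T * latticeDist m.val ^ 3) * latticeDist m.val ^ 2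
          ≤ (Real.exp (-(T-1)) * Real.exp (-1 * latticeDist m.val ^ 3)) * latticeDist m.val ^ 2 :=
            mul_le_mul_of_nonneg_right key (sq_nonneg _)
        _ = Real.exp (-(T-1)) * (Real.exp (-1 * latticeDist m.val ^ 3) * latticeDist m.val ^ 2) := by
            ring
    have hS1 : Summable (fun m : {m : ℤ × ℤ // m ≠ 0} =>
        Real.exp (-(T-1)) * (Real.exp (-1 * latticeDist m ^ 3) * latticeDist m ^ 2)) :=
      hsum1.mul_left _
    have t := Summable.tsum_le_tsum hterm hsum hS1
    rw [tsum_mul_left] at t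
    have hts1nn : 0 ≤ ∑' m : {m : ℤ × ℤ // m ≠ 0},
        Real.exp (-1 * latticeDist m ^ 3) * latticeDist m ^ 2 := by
      apply tsum_nonneg
      intro m
      positivity
    have t2 : (∑' m : {m : ℤ × ℤ // m ≠ 0},
        Real.exp (-T * latticeDist m ^ 3) * latticeDist m ^ 2)
        ≤ Real.exp (-(T-1)) * 208800 := by
      calc (∑' m : {m : ℤ × ℤ // m ≠ 0},
          Real.exp (-T * latticeDist m ^ 3) * latticeDist m ^ 2)
          ≤ Real.exp (-(T-1)) * ∑' m : {m : ℤ × ℤ // m ≠ 0},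
              Real.exp (-1 * latticeDist m ^ 3) * latticeDist m ^ 2 := t
        _ ≤ Real.exp (-(T-1)) * 208800 :=
            mul_le_mul_of_nonneg_left hb1 (Real.exp_pos _).le
    -- exp (-(T-1)) ≤ 81 * T ^ (-(3:ℝ)/2)
    have hT3 : (0:ℝ) < T^3 := by positivity
    have hexpT : T^3 / 27 ≤ Real.exp T := by
      have h := Real.add_one_le_exp (T/3)
      have hc : (T/3+1)^3 ≤ Real.exp (T/3) ^ 3 :=
        pow_le_pow_left₀ (by positivity) h 3
      have he : Real.exp (T/3) ^ 3 = Real.exp T := by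
        rw [← Real.exp_nat_mul]
        congr 1
        push_cast
        ring
      nlinarith [sq_nonneg (T/3), hT.le]
    have hinv : Real.exp (-T) ≤ 27 / T^3 := by
      rw [Real.exp_neg]
      rw [inv_le_iff_one_le_mul₀ (Real.exp_pos T)]
      rw [div_mul_eq_mul_div, le_div_iff₀ hT3]
      nlinarith
    have hppow : T ^ ((3:ℝ)/2) ≤ T^3 := by
      have := Real.rpow_le_rpow_of_exponent_le hT1.le (by norm_num : (3:ℝ)/2 ≤ 3)
      rwa [show ((3:ℝ):ℝ) = ((3:ℕ):ℝ) by norm_num, Real.rpow_natCast] at this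
    have hrp32 : (0:ℝ) < T ^ ((3:ℝ)/2) := Real.rpow_pos_of_pos hT _
    have hexpbd : Real.exp (-(T-1)) ≤ 81 * T ^ (-(3:ℝ)/2) := by
      have e1 : Real.exp (-(T-1)) = Real.exp 1 * Real.exp (-T) := by
        rw [← Real.exp_add]; ring_nf
      have h3 : Real.exp 1 ≤ 3 := by
        have := Real.exp_one_lt_d9
        linarith
      have hneg : T ^ (-(3:ℝ)/2) = (T ^ ((3:ℝ)/2))⁻¹ := by
        rw [neg_div, Real.rpow_neg hT.le]
      have h4 : 27 / T^3 ≤ 27 / T ^ ((3:ℝ)/2) :=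
        div_le_div_of_nonneg_left (by norm_num) hrp32 hppow
      have h5 : Real.exp (-T) ≤ 27 / T ^ ((3:ℝ)/2) := hinv.trans h4
      rw [e1, hneg]
      calc Real.exp 1 * Real.exp (-T) ≤ 3 * (27 / T ^ ((3:ℝ)/2)) :=
            mul_le_mul h3 h5 (Real.exp_pos _).le (by norm_num)
        _ = 81 * (T ^ ((3:ℝ)/2))⁻¹ := by
            rw [div_eq_mul_inv]; ring
    calc (∑' m : {m : ℤ × ℤ // m ≠ 0},
        Real.exp (-T * latticeDist m ^ 3) * latticeDist m ^ 2)
        ≤ Real.exp (-(T-1)) * 208800 := t2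
      _ ≤ (81 * T ^ (-(3:ℝ)/2)) * 208800 :=
          mul_le_mul_of_nonneg_right hexpbd (by norm_num)
      _ = 16912800 * T ^ (-(3:ℝ)/2) := by ring
end

section
/- There is a constant C such that for every k ∈ (2πℤ)² with k ≠ 0: ∑_{k'+k''=k, both nonzero} d(k',0)^(-2) · d(k'',0)^(-1) ≤ C · d(k,0), where d(k,0) = |k1| + |k2|^(2/3). -/
open Real

lemma latticeDist_pos {m : ℤ × ℤ} (hm : m ≠ 0) : 0 < latticeDist m :=
  lt_of_lt_of_le one_pos (one_le_latticeDist hm)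

/-- real subadditivity of rpow with exponent in [0,1] -/
lemma real_rpow_add_le {x y p : ℝ} (hx : 0 ≤ x) (hy : 0 ≤ y) (hp0 : 0 ≤ p) (hp1 : p ≤ 1) :
    (x + y) ^ p ≤ x ^ p + y ^ p := by
  lift x to NNReal using hx
  lift y to NNReal using hy
  have := NNReal.rpow_add_le_add_rpow x y hp0 hp1
  exact_mod_cast this

/-- Pointwise comparison with a summable product. -/
lemma latticeDist_cube_bound (m : ℤ × ℤ) :
    (latticeDist m ^ 3)⁻¹ ≤
      8 * ((1 + |(m.1 : ℝ)|) ^ (-(5/4 : ℝ)) * (1 + |(m.2 : ℝ)|) ^ (-(7/6 : ℝ))) := by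
  by_cases hm : m = 0
  · subst hm
    have : latticeDist 0 = 0 := by
      simp [latticeDist, Real.zero_rpow (by norm_num : (2:ℝ)/3 ≠ 0)]
    rw [this]
    norm_num
  · set L := latticeDist m with hL
    have hL1 : 1 ≤ L := one_le_latticeDist hm
    have hLpos : 0 < L := by linarith
    have hπ : (1 : ℝ) ≤ 2 * π := by have := Real.pi_gt_three; linarith
    set a : ℝ := 1 + |(m.1 : ℝ)| with ha
    set b : ℝ := 1 + |(m.2 : ℝ)| with hb
    have ha1 : (1:ℝ) ≤ a := le_add_of_nonneg_right (abs_nonneg _)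
    have hb1 : (1:ℝ) ≤ b := le_add_of_nonneg_right (abs_nonneg _)
    have hapos : 0 < a := by linarith
    have hbpos : 0 < b := by linarith
    -- a ≤ 2L
    have haL : a ≤ 2 * L := by
      have h1 : |(m.1 : ℝ)| ≤ |2 * π * (m.1 : ℝ)| := by
        rw [abs_mul, abs_of_nonneg (by positivity : (0:ℝ) ≤ 2 * π)]
        exact le_mul_of_one_le_left (abs_nonneg _) hπ
      have h2 : |2 * π * (m.1 : ℝ)| ≤ L := by
        rw [hL]; unfold latticeDist
        have := Real.rpow_nonneg (abs_nonneg (2 * π * (m.2 : ℝ))) ((2:ℝ)/3)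
        linarith
      rw [ha]; linarith
    -- b^(2/3) ≤ 2L
    have hbL : b ^ ((2:ℝ)/3) ≤ 2 * L := by
      have h1 : b ^ ((2:ℝ)/3) ≤ 1 + |(m.2 : ℝ)| ^ ((2:ℝ)/3) := by
        calc b ^ ((2:ℝ)/3) ≤ 1 ^ ((2:ℝ)/3) + |(m.2 : ℝ)| ^ ((2:ℝ)/3) :=
              real_rpow_add_le (by norm_num) (abs_nonneg _) (by norm_num) (by norm_num)
          _ = 1 + |(m.2 : ℝ)| ^ ((2:ℝ)/3) := by rw [Real.one_rpow]
      have h2 : |(m.2 : ℝ)| ^ ((2:ℝ)/3) ≤ |2 * π * (m.2 : ℝ)| ^ ((2:ℝ)/3) := by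
        apply Real.rpow_le_rpow (abs_nonneg _) _ (by norm_num)
        rw [abs_mul, abs_of_nonneg (by positivity : (0:ℝ) ≤ 2 * π)]
        exact le_mul_of_one_le_left (abs_nonneg _) hπ
      have h3 : |2 * π * (m.2 : ℝ)| ^ ((2:ℝ)/3) ≤ L := by
        rw [hL]; unfold latticeDist
        have := abs_nonneg (2 * π * (m.1 : ℝ))
        linarith
      linarith
    -- main product estimate
    have key : a ^ ((5:ℝ)/12) * b ^ ((7:ℝ)/18) ≤ 2 * L := by
      have e1 : a ^ ((5:ℝ)/12) ≤ (2*L) ^ ((5:ℝ)/12) :=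
        Real.rpow_le_rpow hapos.le haL (by norm_num)
      have e2 : b ^ ((7:ℝ)/18) ≤ (2*L) ^ ((7:ℝ)/12) := by
        have : b ^ ((7:ℝ)/18) = (b ^ ((2:ℝ)/3)) ^ ((7:ℝ)/12) := by
          rw [← Real.rpow_mul hbpos.le]; norm_num
        rw [this]
        exact Real.rpow_le_rpow (Real.rpow_nonneg hbpos.le _) hbL (by norm_num)
      calc a ^ ((5:ℝ)/12) * b ^ ((7:ℝ)/18)
          ≤ (2*L) ^ ((5:ℝ)/12) * (2*L) ^ ((7:ℝ)/12) :=
            mul_le_mul e1 e2 (Real.rpow_nonneg hbpos.le _) (Real.rpow_nonneg (by linarith) _)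
        _ = (2*L) ^ ((5:ℝ)/12 + (7:ℝ)/12) := (Real.rpow_add (by linarith) _ _).symm
        _ = 2 * L := by norm_num
    -- cube it
    have key3 : a ^ ((5:ℝ)/4) * b ^ ((7:ℝ)/6) ≤ 8 * L ^ 3 := by
      have h := pow_le_pow_left₀
        (mul_nonneg (Real.rpow_nonneg hapos.le _) (Real.rpow_nonneg hbpos.le _)) key 3
      calc a ^ ((5:ℝ)/4) * b ^ ((7:ℝ)/6)
          = (a ^ ((5:ℝ)/12)) ^ (3:ℕ) * (b ^ ((7:ℝ)/18)) ^ (3:ℕ) := by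
            rw [← Real.rpow_natCast (a ^ ((5:ℝ)/12)) 3, ← Real.rpow_natCast (b ^ ((7:ℝ)/18)) 3,
              ← Real.rpow_mul hapos.le, ← Real.rpow_mul hbpos.le]
            norm_num
        _ = (a ^ ((5:ℝ)/12) * b ^ ((7:ℝ)/18)) ^ (3:ℕ) := (mul_pow _ _ _).symm
        _ ≤ (2 * L) ^ (3:ℕ) := h
        _ = 8 * L ^ 3 := by ring
    -- invert
    have hA : 0 < a ^ ((5:ℝ)/4) * b ^ ((7:ℝ)/6) :=
      mul_pos (Real.rpow_pos_of_pos hapos _) (Real.rpow_pos_of_pos hbpos _)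
    have hinv : (8 * L ^ 3)⁻¹ ≤ (a ^ ((5:ℝ)/4) * b ^ ((7:ℝ)/6))⁻¹ :=
      inv_anti₀ hA key3
    have hL0 : L ≠ 0 := ne_of_gt hLpos
    have : (L ^ 3)⁻¹ = 8 * (8 * L ^ 3)⁻¹ := by
      field_simp
    rw [this, Real.rpow_neg hapos.le, Real.rpow_neg hbpos.le, ← mul_inv]
    exact mul_le_mul_of_nonneg_left hinv (by norm_num)

lemma summable_int_one_add_rpow {p : ℝ} (hp : 1 < p) :
    Summable (fun n : ℤ => (1 + |(n : ℝ)|) ^ (-p)) := by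
  have h1 : Summable (fun n : ℤ => |(n : ℝ)| ^ (-p)) := Real.summable_abs_int_rpow hp
  have h2 : Summable (fun n : ℤ => if n = 0 then (1:ℝ) else 0) :=
    summable_of_ne_finset_zero (s := {0}) (by intro b hb; simp at hb ⊢; exact hb)
  refine Summable.of_nonneg_of_le (fun n => Real.rpow_nonneg (by positivity) _)
    ?_ (h1.add h2)
  intro n
  by_cases hn : n = 0
  · subst hn
    simp [Real.one_rpow, Real.zero_rpow (by linarith : -p ≠ 0)]
  · have h1' : (1:ℝ) ≤ |(n : ℝ)| := by exact_mod_cast Int.one_le_abs hn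
    have : (1 + |(n : ℝ)|) ^ (-p) ≤ |(n : ℝ)| ^ (-p) :=
      Real.rpow_le_rpow_of_nonpos (by linarith) (by linarith) (by linarith)
    simp only [hn, if_false, add_zero]
    exact this

lemma summable_latticeDist_cube : Summable (fun m : ℤ × ℤ => (latticeDist m ^ 3)⁻¹) := by
  have hf : Summable (fun n : ℤ => (1 + |(n : ℝ)|) ^ (-(5/4 : ℝ))) :=
    summable_int_one_add_rpow (by norm_num)
  have hg : Summable (fun n : ℤ => (1 + |(n : ℝ)|) ^ (-(7/6 : ℝ))) :=
    summable_int_one_add_rpow (by norm_num)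
  have hprod : Summable (fun m : ℤ × ℤ =>
      (1 + |(m.1 : ℝ)|) ^ (-(5/4 : ℝ)) * (1 + |(m.2 : ℝ)|) ^ (-(7/6 : ℝ))) :=
    hf.mul_of_nonneg hg (fun n => Real.rpow_nonneg (by positivity) _)
      (fun n => Real.rpow_nonneg (by positivity) _)
  exact Summable.of_nonneg_of_le
    (fun m => inv_nonneg.mpr (pow_nonneg (latticeDist_nonneg m) 3))
    latticeDist_cube_bound (hprod.mul_left 8)

lemma pointwise_bound {k m : ℤ × ℤ} (hm : m ≠ 0) (hmk : m ≠ k) :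
    (latticeDist m ^ 2)⁻¹ * (latticeDist (k - m))⁻¹ ≤
      (latticeDist m ^ 3)⁻¹ + (latticeDist (k - m) ^ 3)⁻¹ := by
  have hkm : k - m ≠ 0 := sub_ne_zero.mpr (Ne.symm hmk)
  set x := latticeDist m with hx
  set y := latticeDist (k - m) with hy
  have hxp : 0 < x := latticeDist_pos hm
  have hyp : 0 < y := latticeDist_pos hkm
  rcases le_total x y with h | h
  · have step : (x ^ 2)⁻¹ * y⁻¹ ≤ (x ^ 2)⁻¹ * x⁻¹ :=
      mul_le_mul_of_nonneg_left (inv_anti₀ hxp h)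
        (inv_nonneg.mpr (pow_nonneg hxp.le 2))
    calc (x ^ 2)⁻¹ * y⁻¹ ≤ (x ^ 2)⁻¹ * x⁻¹ := step
      _ = (x ^ 3)⁻¹ := by rw [← mul_inv, ← pow_succ]
      _ ≤ (x ^ 3)⁻¹ + (y ^ 3)⁻¹ :=
          le_add_of_nonneg_right (inv_nonneg.mpr (pow_nonneg hyp.le 3))
  · have step : (x ^ 2)⁻¹ * y⁻¹ ≤ (y ^ 2)⁻¹ * y⁻¹ :=
      mul_le_mul_of_nonneg_right
        (inv_anti₀ (pow_pos hyp 2) (pow_le_pow_left₀ hyp.le h 2))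
        (inv_nonneg.mpr hyp.le)
    calc (x ^ 2)⁻¹ * y⁻¹ ≤ (y ^ 2)⁻¹ * y⁻¹ := step
      _ = (y ^ 3)⁻¹ := by rw [← mul_inv, ← pow_succ]
      _ ≤ (x ^ 3)⁻¹ + (y ^ 3)⁻¹ :=
          le_add_of_nonneg_left (inv_nonneg.mpr (pow_nonneg hxp.le 3))

/-- Convolution estimate: for nonzero `k ∈ (2πℤ)²`,
`∑_{k'+k''=k, k',k''≠0} d(k',0)⁻² d(k'',0)⁻¹ ≤ C·d(k,0)`. -/
theorem lattice_convolution_bound_21 :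
    ∃ C : ℝ, 0 < C ∧ ∀ k : ℤ × ℤ, k ≠ 0 →
      Summable (fun m : ℤ × ℤ =>
        if m ≠ 0 ∧ m ≠ k then
          (latticeDist m ^ 2)⁻¹ * (latticeDist (k - m))⁻¹ else 0) ∧
      (∑' m : ℤ × ℤ,
          if m ≠ 0 ∧ m ≠ k then
            (latticeDist m ^ 2)⁻¹ * (latticeDist (k - m))⁻¹ else 0)
        ≤ C * latticeDist k := by
  set G : ℤ × ℤ → ℝ := fun m => (latticeDist m ^ 3)⁻¹ with hG
  have hGsum : Summable G := summable_latticeDist_cube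
  have hGnn : ∀ m, 0 ≤ G m :=
    fun m => inv_nonneg.mpr (pow_nonneg (latticeDist_nonneg m) 3)
  set T : ℝ := ∑' m, G m with hT
  have hTnn : 0 ≤ T := tsum_nonneg hGnn
  refine ⟨2 * T + 1, by linarith, fun k hk => ?_⟩
  have hGshift : Summable (fun m : ℤ × ℤ => G (k - m)) := by
    have : (fun m : ℤ × ℤ => G (k - m)) = G ∘ (fun m => k - m) := rfl
    rw [this]
    exact hGsum.comp_injective sub_right_injective
  have hMaj : Summable (fun m : ℤ × ℤ => G m + G (k - m)) := hGsum.add hGshift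
  have hle : ∀ m : ℤ × ℤ,
      (if m ≠ 0 ∧ m ≠ k then (latticeDist m ^ 2)⁻¹ * (latticeDist (k - m))⁻¹ else 0)
        ≤ G m + G (k - m) := by
    intro m
    by_cases h : m ≠ 0 ∧ m ≠ k
    · rw [if_pos h]; exact pointwise_bound h.1 h.2
    · rw [if_neg h]; exact add_nonneg (hGnn m) (hGnn _)
  have hnn : ∀ m : ℤ × ℤ,
      0 ≤ (if m ≠ 0 ∧ m ≠ k then (latticeDist m ^ 2)⁻¹ * (latticeDist (k - m))⁻¹ else 0) := by
    intro m
    by_cases h : m ≠ 0 ∧ m ≠ k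
    · rw [if_pos h]
      exact mul_nonneg (inv_nonneg.mpr (pow_nonneg (latticeDist_nonneg m) 2))
        (inv_nonneg.mpr (latticeDist_nonneg _))
    · rw [if_neg h]
  have hsummable : Summable (fun m : ℤ × ℤ =>
      if m ≠ 0 ∧ m ≠ k then (latticeDist m ^ 2)⁻¹ * (latticeDist (k - m))⁻¹ else 0) :=
    Summable.of_nonneg_of_le hnn hle hMaj
  refine ⟨hsummable, ?_⟩
  have hshift_eq : (∑' m : ℤ × ℤ, G (k - m)) = T := by
    rw [hT]
    exact ((Equiv.subLeft k).tsum_eq G)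
  calc (∑' m : ℤ × ℤ,
          if m ≠ 0 ∧ m ≠ k then (latticeDist m ^ 2)⁻¹ * (latticeDist (k - m))⁻¹ else 0)
      ≤ ∑' m : ℤ × ℤ, (G m + G (k - m)) := Summable.tsum_le_tsum hle hsummable hMaj
    _ = T + T := by rw [Summable.tsum_add hGsum hGshift, hshift_eq]
    _ = 2 * T := by ring
    _ ≤ (2 * T + 1) * 1 := by linarith
    _ ≤ (2 * T + 1) * latticeDist k :=
        mul_le_mul_of_nonneg_left (one_le_latticeDist hk) (by linarith)
end

section
/- Let ψ: ℝ² → ℝ be the kernel with Fourier transform ψ̂(k) = exp(-(|k1|³ + k2²)). Then for all nonneg integers j, l and all real α with 0 ≤ α ≤ j + 2, the moment ∫_{ℝ²} |∂1^j ∂2^l ψ(x)| · d(x,0)^α dx is finite, where d(x,0) = |x1| + |x2|^(2/3). -/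
open MeasureTheory Real

/-- Partial derivative in the first variable of a function on `ℝ²`. -/
noncomputable def pd1 (f : ℝ × ℝ → ℂ) : ℝ × ℝ → ℂ :=
  fun x => deriv (fun t : ℝ => f (t, x.2)) x.1

/-- Partial derivative in the second variable of a function on `ℝ²`. -/
noncomputable def pd2 (f : ℝ × ℝ → ℂ) : ℝ × ℝ → ℂ :=
  fun x => deriv (fun t : ℝ => f (x.1, t)) x.2


open MeasureTheory Real Filter Polynomial Set FourierTransform Topology

namespace KMB


/-! ### polynomial × exponential-of-polynomial calculus -/

noncomputable def pexp (W P : ℝ[X]) (k : ℝ) : ℝ := P.eval k * Real.exp (W.eval k)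

lemma hasDerivAt_pexp (W P : ℝ[X]) (k : ℝ) :
    HasDerivAt (pexp W P) (pexp W (derivative P + derivative W * P) k) k := by
  have h := (P.hasDerivAt k).mul ((W.hasDerivAt k).exp)
  refine HasDerivAt.congr_deriv (f := pexp W P) h ?_
  simp only [pexp, eval_add, eval_mul]
  ring

noncomputable def pbound (P : ℝ[X]) : ℝ :=
  ∑ i ∈ Finset.range (P.natDegree + 1), |P.coeff i|

lemma pbound_nonneg (P : ℝ[X]) : 0 ≤ pbound P :=
  Finset.sum_nonneg fun _ _ => abs_nonneg _

lemma abs_eval_le (P : ℝ[X]) {k : ℝ} (hk : 1 ≤ k) :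
    |P.eval k| ≤ pbound P * k ^ P.natDegree := by
  have h0 : (0:ℝ) ≤ k := le_trans zero_le_one hk
  rw [eval_eq_sum_range]
  refine le_trans (Finset.abs_sum_le_sum_abs _ _) ?_
  rw [pbound, Finset.sum_mul]
  refine Finset.sum_le_sum fun i hi => ?_
  rw [abs_mul, _root_.abs_pow, _root_.abs_of_nonneg h0]
  have : k ^ i ≤ k ^ P.natDegree :=
    pow_le_pow_right₀ hk (Nat.lt_succ_iff.mp (Finset.mem_range.mp hi))
  exact mul_le_mul_of_nonneg_left this (abs_nonneg _) |>.trans_eq rfl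
    |>.trans (le_refl _)

lemma abs_pexp_le (W P : ℝ[X]) (hW : ∀ k : ℝ, 1 ≤ k → W.eval k ≤ -k) {k : ℝ} (hk : 1 ≤ k) :
    |pexp W P k| ≤ pbound P * (k ^ P.natDegree * Real.exp (-k)) := by
  rw [pexp, abs_mul, _root_.abs_of_nonneg (Real.exp_pos _).le, ← mul_assoc]
  exact mul_le_mul (abs_eval_le P hk) (Real.exp_le_exp.2 (hW k hk))
    (Real.exp_pos _).le (mul_nonneg (pbound_nonneg P) (by positivity))

lemma continuous_pexp (W P : ℝ[X]) : Continuous (pexp W P) :=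
  (P.continuous).mul ((W.continuous).rexp)

lemma integrableOn_pow_mul_exp_neg (d : ℕ) :
    IntegrableOn (fun k : ℝ => k ^ d * Real.exp (-k)) (Ioi 1) := by
  have h := Real.GammaIntegral_convergent (s := (d : ℝ) + 1) (by positivity)
  have h2 : IntegrableOn (fun x : ℝ => Real.exp (-x) * x ^ ((d : ℝ))) (Ioi 0) := by
    simpa using h
  refine ((h2.mono_set (Ioi_subset_Ioi zero_le_one)).congr_fun (fun x hx => ?_)
    measurableSet_Ioi).mono_set (le_refl _)
  rw [Real.rpow_natCast, mul_comm]

lemma integrableOn_Ioi_pexp (W P : ℝ[X]) (hW : ∀ k : ℝ, 1 ≤ k → W.eval k ≤ -k) :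
    IntegrableOn (pexp W P) (Ioi 0) := by
  have : Ioi (0:ℝ) = Ioc 0 1 ∪ Ioi 1 := by
    rw [Ioc_union_Ioi_eq_Ioi zero_le_one]
  rw [this]
  refine IntegrableOn.union ?_ ?_
  · exact (continuous_pexp W P).continuousOn.integrableOn_Icc.mono_set Ioc_subset_Icc_self
  · refine Integrable.mono' ((integrableOn_pow_mul_exp_neg P.natDegree).const_mul (pbound P))
      ((continuous_pexp W P).aestronglyMeasurable.restrict) ?_
    filter_upwards [ae_restrict_mem measurableSet_Ioi] with k hk
    rw [Real.norm_eq_abs, ← mul_assoc] at *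
    exact (abs_pexp_le W P hW (le_of_lt hk)).trans_eq (by ring)

lemma tendsto_pexp (W P : ℝ[X]) (hW : ∀ k : ℝ, 1 ≤ k → W.eval k ≤ -k) :
    Tendsto (pexp W P) atTop (𝓝 0) := by
  have h2 : Tendsto (fun k : ℝ => pbound P * (k ^ P.natDegree * Real.exp (-k))) atTop (𝓝 0) := by
    simpa using (tendsto_pow_mul_exp_neg_atTop_nhds_zero P.natDegree).const_mul (pbound P)
  refine squeeze_zero_norm' ?_ h2
  filter_upwards [eventually_ge_atTop (1:ℝ)] with k hk
  exact (abs_pexp_le W P hW hk)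


/-! ### Integration by parts on the half line -/

lemma norm_cexp_mul_I (k s : ℝ) : ‖Complex.exp (↑k * ↑s * Complex.I)‖ = 1 := by
  rw [Complex.norm_exp]
  simp

lemma hasDerivAt_cexp_mul (s k : ℝ) :
    HasDerivAt (fun k : ℝ => Complex.exp (↑k * ↑s * Complex.I))
      ((↑s * Complex.I) * Complex.exp (↑k * ↑s * Complex.I)) k := by
  have h : HasDerivAt (fun k : ℝ => ((k : ℂ) * ↑s * Complex.I : ℂ)) (↑s * Complex.I) k := by
    simpa [mul_assoc] using ((hasDerivAt_id k).ofReal_comp).mul_const ((s : ℂ) * Complex.I)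
  simpa [mul_comm] using h.cexp

lemma integrableOn_cexp_mul {f : ℝ → ℂ} {s : Set ℝ} (hf : IntegrableOn f s) (c : ℝ) :
    IntegrableOn (fun k => Complex.exp (↑k * ↑c * Complex.I) * f k) s := by
  refine Integrable.bdd_mul (c := 1) hf ?_ (ae_of_all _ fun k => le_of_eq (norm_cexp_mul_I k c))
  exact (Continuous.aestronglyMeasurable (by continuity)).restrict

lemma ibp_step {f g : ℝ → ℂ} {s : ℝ} (hs : s ≠ 0)
    (hderiv : ∀ k, HasDerivAt f (g k) k)
    (hf : IntegrableOn f (Ioi 0)) (hg : IntegrableOn g (Ioi 0))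
    (hf0 : Tendsto f atTop (𝓝 0)) :
    ∫ k in Ioi (0:ℝ), Complex.exp (↑k * ↑s * Complex.I) * f k
      = f 0 * (-(↑s * Complex.I)⁻¹)
        + (-(↑s * Complex.I)⁻¹) * ∫ k in Ioi (0:ℝ), Complex.exp (↑k * ↑s * Complex.I) * g k := by
  set w : ℂ := ((s : ℂ) * Complex.I) with hwdef
  have hw : w ≠ 0 := mul_ne_zero (Complex.ofReal_ne_zero.mpr hs) Complex.I_ne_zero
  have hF : ∀ k : ℝ, HasDerivAt (fun k : ℝ => Complex.exp (↑k * ↑s * Complex.I) * f k)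
      (w * (Complex.exp (↑k * ↑s * Complex.I) * f k)
        + Complex.exp (↑k * ↑s * Complex.I) * g k) k := by
    intro k
    have h := (hasDerivAt_cexp_mul s k).mul (hderiv k)
    refine h.congr_deriv ?_
    simp only [hwdef]
    ring
  have hef : IntegrableOn (fun k : ℝ => Complex.exp (↑k * ↑s * Complex.I) * f k) (Ioi 0) :=
    integrableOn_cexp_mul hf s
  have heg : IntegrableOn (fun k : ℝ => Complex.exp (↑k * ↑s * Complex.I) * g k) (Ioi 0) :=
    integrableOn_cexp_mul hg s
  have hInt : IntegrableOn (fun k : ℝ => w * (Complex.exp (↑k * ↑s * Complex.I) * f k)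
      + Complex.exp (↑k * ↑s * Complex.I) * g k) (Ioi 0) := (hef.const_mul w).add heg
  have hT : Tendsto (fun k : ℝ => Complex.exp (↑k * ↑s * Complex.I) * f k) atTop (𝓝 0) := by
    refine squeeze_zero_norm (fun k => ?_) (tendsto_zero_iff_norm_tendsto_zero.mp hf0)
    rw [norm_mul, norm_cexp_mul_I, one_mul]
  have key := integral_Ioi_of_hasDerivAt_of_tendsto
    (f := fun k : ℝ => Complex.exp (↑k * ↑s * Complex.I) * f k)
    (f' := fun k : ℝ => w * (Complex.exp (↑k * ↑s * Complex.I) * f k)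
      + Complex.exp (↑k * ↑s * Complex.I) * g k)
    (a := 0) (m := 0) ((hF 0).continuousAt.continuousWithinAt) (fun x _ => hF x) hInt hT
  rw [integral_add (hef.const_mul w) heg, MeasureTheory.integral_const_mul] at key
  simp only [zero_sub, Complex.ofReal_zero, zero_mul, Complex.exp_zero, one_mul] at key
  have := congrArg (fun z => -w⁻¹ * z) key
  simp only [neg_mul, mul_add] at this
  rw [← mul_assoc, inv_mul_cancel₀ hw, one_mul] at this
  linear_combination (-1 : ℂ) * this

lemma ibp_iter (u : ℕ → ℝ → ℂ) {s : ℝ} (hs : s ≠ 0) (n : ℕ)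
    (hderiv : ∀ m, m < n → ∀ k, HasDerivAt (u m) (u (m+1) k) k)
    (hint : ∀ m, m ≤ n → IntegrableOn (u m) (Ioi 0))
    (h0 : ∀ m, m < n → Tendsto (u m) atTop (𝓝 0)) :
    ∫ k in Ioi (0:ℝ), Complex.exp (↑k * ↑s * Complex.I) * u 0 k
      = (∑ m ∈ Finset.range n, u m 0 * (-(↑s * Complex.I)⁻¹) ^ (m+1))
        + (-(↑s * Complex.I)⁻¹) ^ n
          * ∫ k in Ioi (0:ℝ), Complex.exp (↑k * ↑s * Complex.I) * u n k := by
  induction n with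
  | zero => simp
  | succ n ih =>
    rw [ih (fun m hm => hderiv m (hm.trans (Nat.lt_succ_self n)))
        (fun m hm => hint m (hm.trans (Nat.le_succ n)))
        (fun m hm => h0 m (hm.trans (Nat.lt_succ_self n))),
      ibp_step hs (hderiv n (Nat.lt_succ_self n)) (hint n (Nat.le_succ n))
        (hint (n+1) le_rfl) (h0 n (Nat.lt_succ_self n)),
      Finset.sum_range_succ]
    ring


/-! ### Decay of Fourier-type integrals via IBP and parity cancellation -/

lemma decay_bound (u : ℕ → ℝ → ℂ) (p N : ℕ) {v : ℝ → ℂ} {s : ℝ} (hs : s ≠ 0)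
    (hderiv : ∀ m, m < N + 2 → ∀ k, HasDerivAt (u m) (u (m+1) k) k)
    (hint : ∀ m, m ≤ N + 2 → IntegrableOn (u m) (Ioi 0))
    (h0 : ∀ m, m < N + 2 → Tendsto (u m) atTop (𝓝 0))
    (hv : Integrable v)
    (hodd : ∀ k, v (-k) = (-1 : ℂ)^p * v k)
    (hvu : ∀ k, 0 < k → v k = u 0 k)
    (hcancel : ∀ m, m ≤ N → u m 0 * (1 + (-1:ℂ)^(p+m+1)) = 0) :
    ‖∫ k : ℝ, Complex.exp (↑k * ↑s * Complex.I) * v k‖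
      ≤ (2 * ‖u (N+1) 0‖ + 2 * ∫ k in Ioi (0:ℝ), ‖u (N+2) k‖) / |s|^(N+2) := by
  have hsneg : (-s) ≠ 0 := neg_ne_zero.mpr hs
  have hIioiv : ∀ (σ : ℝ), (∫ k in Ioi (0:ℝ), Complex.exp (↑k * ↑σ * Complex.I) * v k)
      = ∫ k in Ioi (0:ℝ), Complex.exp (↑k * ↑σ * Complex.I) * u 0 k := by
    intro σ
    refine setIntegral_congr_fun measurableSet_Ioi (fun x hx => ?_)
    rw [hvu x hx]
  have hev : Integrable (fun k : ℝ => Complex.exp (↑k * ↑s * Complex.I) * v k) :=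
    integrableOn_univ.mp (integrableOn_cexp_mul (integrableOn_univ.mpr hv) s)
  have hsplit := intervalIntegral.integral_Iic_add_Ioi (b := (0:ℝ)) hev.integrableOn hev.integrableOn
  have hneg : (∫ k in Iic (0:ℝ), Complex.exp (↑k * ↑s * Complex.I) * v k)
      = (-1:ℂ)^p * ∫ k in Ioi (0:ℝ), Complex.exp (↑k * ↑(-s) * Complex.I) * v k := by
    have h := integral_comp_neg_Ioi (0:ℝ) (fun k => Complex.exp (↑k * ↑s * Complex.I) * v k)
    rw [neg_zero] at h
    rw [← h, ← MeasureTheory.integral_const_mul]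
    refine setIntegral_congr_fun measurableSet_Ioi (fun x hx => ?_)
    have harg : ((-x : ℝ) : ℂ) * ↑s * Complex.I = (x:ℂ) * ↑(-s) * Complex.I := by
      push_cast; ring
    simp only [harg, hodd]
    ring
  have hibp : ∀ σ : ℝ, σ ≠ 0 → (∫ k in Ioi (0:ℝ), Complex.exp (↑k * ↑σ * Complex.I) * u 0 k)
      = (∑ m ∈ Finset.range (N+2), u m 0 * (-((σ:ℂ) * Complex.I)⁻¹) ^ (m+1))
        + (-((σ:ℂ) * Complex.I)⁻¹) ^ (N+2)
          * ∫ k in Ioi (0:ℝ), Complex.exp (↑k * ↑σ * Complex.I) * u (N+2) k :=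
    fun σ hσ => ibp_iter u hσ (N+2) hderiv hint h0
  set z : ℂ := -((s:ℂ) * Complex.I)⁻¹ with hz
  have hzneg : -(((-s : ℝ):ℂ) * Complex.I)⁻¹ = -z := by
    push_cast
    rw [neg_mul, inv_neg, neg_neg]
  have hnz : ‖z‖ = |s|⁻¹ := by
    rw [hz]
    rw [norm_neg, norm_inv, norm_mul, Complex.norm_real, Complex.norm_I, mul_one,
      Real.norm_eq_abs]
  have hsum : (∑ m ∈ Finset.range (N+2), u m 0 * z ^ (m+1))
      + (-1:ℂ)^p * ∑ m ∈ Finset.range (N+2), u m 0 * (-z) ^ (m+1)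
      = u (N+1) 0 * z^(N+2) * (1 + (-1:ℂ)^(p+N+2)) := by
    rw [Finset.mul_sum, ← Finset.sum_add_distrib]
    have hterm : ∀ m ∈ Finset.range (N+2),
        u m 0 * z^(m+1) + (-1:ℂ)^p * (u m 0 * (-z)^(m+1))
          = u m 0 * (1 + (-1:ℂ)^(p+m+1)) * z^(m+1) := by
      intro m _
      clear_value z
      rw [neg_pow, show ((-1:ℂ))^(p+m+1) = (-1:ℂ)^p * (-1:ℂ)^(m+1) by
        rw [← pow_add, Nat.add_assoc]]
      ring_nf
    rw [Finset.sum_congr rfl hterm, Finset.sum_range_succ]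
    have hzero : (∑ m ∈ Finset.range (N+1), u m 0 * (1 + (-1:ℂ)^(p+m+1)) * z^(m+1)) = 0 :=
      Finset.sum_eq_zero fun m hm => by
        rw [hcancel m (Nat.lt_succ_iff.mp (Finset.mem_range.mp hm)), zero_mul]
    rw [hzero, zero_add]
    have hpn : p + (N + 1) + 1 = p + N + 2 := by ring
    rw [hpn]
    ring_nf
  have hX : (∫ k : ℝ, Complex.exp (↑k * ↑s * Complex.I) * v k)
      = u (N+1) 0 * z^(N+2) * (1 + (-1:ℂ)^(p+N+2))
        + (z ^ (N+2) * (∫ k in Ioi (0:ℝ), Complex.exp (↑k * ↑s * Complex.I) * u (N+2) k)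
        + (-1:ℂ)^p * ((-z) ^ (N+2)
          * ∫ k in Ioi (0:ℝ), Complex.exp (↑k * ↑(-s) * Complex.I) * u (N+2) k)) := by
    rw [← hsplit, hneg, hIioiv s, hIioiv (-s), hibp s hs, hibp (-s) hsneg, hzneg]
    linear_combination hsum
  have hRn : ∀ σ : ℝ, ‖∫ k in Ioi (0:ℝ), Complex.exp (↑k * ↑σ * Complex.I) * u (N+2) k‖
      ≤ ∫ k in Ioi (0:ℝ), ‖u (N+2) k‖ := by
    intro σ
    refine (norm_integral_le_integral_norm _).trans (le_of_eq ?_)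
    refine setIntegral_congr_fun measurableSet_Ioi (fun x _ => ?_)
    rw [norm_mul, norm_cexp_mul_I, one_mul]
  have hRnonneg : (0:ℝ) ≤ ∫ k in Ioi (0:ℝ), ‖u (N+2) k‖ :=
    integral_nonneg fun k => norm_nonneg _
  have hone : ‖(1 + (-1:ℂ)^(p+N+2))‖ ≤ 2 := by
    refine (norm_add_le _ _).trans ?_
    rw [norm_one, norm_pow, norm_neg, norm_one, one_pow]
    norm_num
  rw [hX]
  have habs : (0:ℝ) ≤ |s|⁻¹ := inv_nonneg.mpr (abs_nonneg s)
  calc ‖u (N+1) 0 * z^(N+2) * (1 + (-1:ℂ)^(p+N+2))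
        + (z ^ (N+2) * (∫ k in Ioi (0:ℝ), Complex.exp (↑k * ↑s * Complex.I) * u (N+2) k)
        + (-1:ℂ)^p * ((-z) ^ (N+2)
          * ∫ k in Ioi (0:ℝ), Complex.exp (↑k * ↑(-s) * Complex.I) * u (N+2) k))‖
      ≤ ‖u (N+1) 0 * z^(N+2) * (1 + (-1:ℂ)^(p+N+2))‖
        + (‖z ^ (N+2) * (∫ k in Ioi (0:ℝ), Complex.exp (↑k * ↑s * Complex.I) * u (N+2) k)‖
        + ‖(-1:ℂ)^p * ((-z) ^ (N+2)
          * ∫ k in Ioi (0:ℝ), Complex.exp (↑k * ↑(-s) * Complex.I) * u (N+2) k)‖) :=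
      (norm_add_le _ _).trans (by gcongr; exact norm_add_le _ _)
    _ ≤ ‖u (N+1) 0‖ * (|s|⁻¹)^(N+2) * 2
        + ((|s|⁻¹)^(N+2) * (∫ k in Ioi (0:ℝ), ‖u (N+2) k‖)
          + (|s|⁻¹)^(N+2) * (∫ k in Ioi (0:ℝ), ‖u (N+2) k‖)) := by
      have e1 : ‖u (N+1) 0 * z^(N+2) * (1 + (-1:ℂ)^(p+N+2))‖
          = ‖u (N+1) 0‖ * (|s|⁻¹)^(N+2) * ‖(1 + (-1:ℂ)^(p+N+2))‖ := by
        rw [norm_mul, norm_mul, norm_pow, hnz]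
      have e2 : ‖z ^ (N+2) * (∫ k in Ioi (0:ℝ), Complex.exp (↑k * ↑s * Complex.I) * u (N+2) k)‖
          = (|s|⁻¹)^(N+2) * ‖∫ k in Ioi (0:ℝ), Complex.exp (↑k * ↑s * Complex.I) * u (N+2) k‖ := by
        rw [norm_mul, norm_pow, hnz]
      have e3 : ‖(-1:ℂ)^p * ((-z) ^ (N+2)
            * ∫ k in Ioi (0:ℝ), Complex.exp (↑k * ↑(-s) * Complex.I) * u (N+2) k)‖
          = (|s|⁻¹)^(N+2) * ‖∫ k in Ioi (0:ℝ), Complex.exp (↑k * ↑(-s) * Complex.I) * u (N+2) k‖ := by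
        rw [norm_mul, norm_mul, norm_pow, norm_pow, norm_neg, norm_neg, norm_one, one_pow,
          one_mul, hnz]
      rw [e1, e2, e3]
      refine add_le_add ?_ (add_le_add ?_ ?_)
      · exact mul_le_mul_of_nonneg_left hone
          (mul_nonneg (norm_nonneg _) (pow_nonneg habs _))
      · exact mul_le_mul_of_nonneg_left (hRn s) (pow_nonneg habs _)
      · exact mul_le_mul_of_nonneg_left (hRn (-s)) (pow_nonneg habs _)
    _ = (2 * ‖u (N+1) 0‖ + 2 * ∫ k in Ioi (0:ℝ), ‖u (N+2) k‖) / |s|^(N+2) := by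
      rw [div_eq_mul_inv, ← inv_pow]
      ring


/-! ### The polynomial recursion family -/

noncomputable def Rseq (Q P0 : ℝ[X]) : ℕ → ℝ[X]
  | 0 => P0
  | (m+1) => derivative (Rseq Q P0 m) + Q * Rseq Q P0 m

noncomputable def uSeq (c : ℂ) (W P0 : ℝ[X]) (m : ℕ) : ℝ → ℂ :=
  fun k => c * ((pexp W (Rseq (derivative W) P0 m) k : ℝ) : ℂ)

lemma hasDerivAt_uSeq (c : ℂ) (W P0 : ℝ[X]) (m : ℕ) (k : ℝ) :
    HasDerivAt (uSeq c W P0 m) (uSeq c W P0 (m+1) k) k := by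
  have h := ((hasDerivAt_pexp W (Rseq (derivative W) P0 m) k).ofReal_comp).const_mul c
  exact h

lemma integrableOn_uSeq (c : ℂ) (W P0 : ℝ[X]) (hW : ∀ k : ℝ, 1 ≤ k → W.eval k ≤ -k) (m : ℕ) :
    IntegrableOn (uSeq c W P0 m) (Ioi 0) :=
  ((integrableOn_Ioi_pexp W _ hW).ofReal).const_mul c

lemma tendsto_uSeq (c : ℂ) (W P0 : ℝ[X]) (hW : ∀ k : ℝ, 1 ≤ k → W.eval k ≤ -k) (m : ℕ) :
    Tendsto (uSeq c W P0 m) atTop (𝓝 0) := by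
  have h := (tendsto_pexp W (Rseq (derivative W) P0 m) hW)
  have h2 : Tendsto (fun k => ((pexp W (Rseq (derivative W) P0 m) k : ℝ) : ℂ)) atTop (𝓝 0) := by
    have := (Complex.continuous_ofReal.tendsto (0:ℝ)).comp h
    simpa [Function.comp_def] using this
  have h3 := h2.const_mul c
  rw [mul_zero] at h3
  exact h3

lemma uSeq_zero (c : ℂ) (W P0 : ℝ[X]) (hW0 : W.eval 0 = 0) (m : ℕ) :
    uSeq c W P0 m 0 = c * (((Rseq (derivative W) P0 m).coeff 0 : ℝ) : ℂ) := by
  rw [uSeq, pexp, hW0, Real.exp_zero, mul_one, ← Polynomial.coeff_zero_eq_eval_zero]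

/-! ### Coefficient vanishing -/

lemma cubic_coeff (e : ℝ) (j : ℕ) :
    ∀ m d : ℕ, ((d:ℤ) < (j:ℤ) - (m:ℤ) ∨ (d:ℤ) = (j:ℤ) - (m:ℤ) + 1) →
      (Rseq (Polynomial.C e * Polynomial.X^2) (Polynomial.X^j) m).coeff d = 0 := by
  intro m
  induction m with
  | zero =>
    intro d hd
    have hdj : d ≠ j := by rcases hd with h | h <;> omega
    simp only [Rseq, Polynomial.coeff_X_pow]
    simp [hdj]
  | succ m ih =>
    intro d hd
    have hcomm : Polynomial.C e * Polynomial.X^2 * Rseq (Polynomial.C e * Polynomial.X^2) (Polynomial.X^j) m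
        = Polynomial.C e * (Rseq (Polynomial.C e * Polynomial.X^2) (Polynomial.X^j) m * Polynomial.X^2) := by
      ring
    simp only [Rseq]
    rw [Polynomial.coeff_add, Polynomial.coeff_derivative, hcomm, Polynomial.coeff_C_mul,
      Polynomial.coeff_mul_X_pow']
    have h1 : (Rseq (Polynomial.C e * Polynomial.X^2) (Polynomial.X^j) m).coeff (d+1) = 0 := by
      refine ih (d+1) ?_
      rcases hd with h | h
      · left; push_cast; omega
      · right; push_cast; omega
    rw [h1, zero_mul, zero_add]
    split_ifs with h2
    · have h3 : (Rseq (Polynomial.C e * Polynomial.X^2) (Polynomial.X^j) m).coeff (d-2) = 0 := by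
        refine ih (d-2) ?_
        left
        have : ((d - 2 : ℕ) : ℤ) = (d:ℤ) - 2 := by omega
        rw [this]
        rcases hd with h | h <;> omega
      rw [h3, mul_zero]
    · rw [mul_zero]

lemma parity_coeff (e : ℝ) (l : ℕ) :
    ∀ m d : ℕ, (d + m + l) % 2 = 1 →
      (Rseq (Polynomial.C e * Polynomial.X^1) (Polynomial.X^l) m).coeff d = 0 := by
  intro m
  induction m with
  | zero =>
    intro d hd
    have hdl : d ≠ l := by omega
    simp only [Rseq, Polynomial.coeff_X_pow]
    simp [hdl]
  | succ m ih =>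
    intro d hd
    have hcomm : Polynomial.C e * Polynomial.X^1 * Rseq (Polynomial.C e * Polynomial.X^1) (Polynomial.X^l) m
        = Polynomial.C e * (Rseq (Polynomial.C e * Polynomial.X^1) (Polynomial.X^l) m * Polynomial.X^1) := by
      ring
    simp only [Rseq]
    rw [Polynomial.coeff_add, Polynomial.coeff_derivative, hcomm, Polynomial.coeff_C_mul,
      Polynomial.coeff_mul_X_pow']
    rw [ih (d+1) (by omega), zero_mul, zero_add]
    split_ifs with h2
    · rw [ih (d-1) (by omega), mul_zero]
    · rw [mul_zero]

/-! ### Reflection integrability -/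

lemma integrableOn_Iio_neg {f : ℝ → ℂ} (h : IntegrableOn (fun x => f (-x)) (Ioi 0)) :
    IntegrableOn f (Iio 0) := by
  have A : MeasurableEmbedding (fun x : ℝ => -x) :=
    (Homeomorph.neg ℝ).isClosedEmbedding.measurableEmbedding
  have hmap : Measure.map (fun x : ℝ => -x) (volume.restrict (Ioi 0)) = volume.restrict (Iio 0) := by
    rw [show Ioi (0:ℝ) = (fun x : ℝ => -x) ⁻¹' (Iio 0) by ext x; simp,
      ← Measure.restrict_map measurable_neg measurableSet_Iio, Measure.map_neg_eq_self]
  rw [IntegrableOn, ← hmap, A.integrable_map_iff]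
  exact h

lemma integrable_of_neg {f : ℝ → ℂ} (hIoi : IntegrableOn f (Ioi 0))
    (h : IntegrableOn (fun x => f (-x)) (Ioi 0)) : Integrable f := by
  have h2 : IntegrableOn f (Ici 0) := (integrableOn_Ici_iff_integrableOn_Ioi).mpr hIoi
  have h3 := (integrableOn_Iio_neg h).union h2
  rwa [Iio_union_Ici, integrableOn_univ] at h3


/-! ### The concrete kernels -/

noncomputable def W1 : ℝ[X] := Polynomial.C (-(2*π)^3) * Polynomial.X^3
noncomputable def W2 : ℝ[X] := Polynomial.C (-(2*π)^2) * Polynomial.X^2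
noncomputable def G1 : ℝ → ℂ := fun ξ => ((Real.exp (-|2*π*ξ|^3) : ℝ) : ℂ)
noncomputable def G2 : ℝ → ℂ := fun ξ => ((Real.exp (-(2*π*ξ)^2) : ℝ) : ℂ)

lemma one_le_two_pi : (1:ℝ) ≤ 2*π := by
  have := Real.pi_gt_three
  linarith

lemma hW1 : ∀ k : ℝ, 1 ≤ k → W1.eval k ≤ -k := by
  intro k hk
  simp only [W1, Polynomial.eval_mul, Polynomial.eval_C, Polynomial.eval_pow, Polynomial.eval_X]
  have h1 : k ≤ k^3 := le_self_pow₀ hk (by norm_num)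
  have h2 : (1:ℝ) ≤ (2*π)^3 := one_le_pow₀ one_le_two_pi
  nlinarith

lemma hW2 : ∀ k : ℝ, 1 ≤ k → W2.eval k ≤ -k := by
  intro k hk
  simp only [W2, Polynomial.eval_mul, Polynomial.eval_C, Polynomial.eval_pow, Polynomial.eval_X]
  have h1 : k ≤ k^2 := le_self_pow₀ hk (by norm_num)
  have h2 : (1:ℝ) ≤ (2*π)^2 := one_le_pow₀ one_le_two_pi
  nlinarith

lemma W1_zero : W1.eval 0 = 0 := by simp [W1]
lemma W2_zero : W2.eval 0 = 0 := by simp [W2]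

lemma G1_even (ξ : ℝ) : G1 (-ξ) = G1 ξ := by
  simp only [G1]
  rw [show 2*π*(-ξ) = -(2*π*ξ) by ring, abs_neg]

lemma G2_even (ξ : ℝ) : G2 (-ξ) = G2 ξ := by
  simp only [G2]
  rw [show (2*π*(-ξ))^2 = (2*π*ξ)^2 by ring]

lemma continuous_G1 : Continuous G1 := by
  refine Complex.continuous_ofReal.comp (Real.continuous_exp.comp ?_)
  fun_prop

lemma continuous_G2 : Continuous G2 := by
  refine Complex.continuous_ofReal.comp (Real.continuous_exp.comp ?_)
  fun_prop

lemma G1_pexp {x : ℝ} (hx : 0 < x) (n : ℕ) :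
    ((x:ℂ))^n * G1 x = ((pexp W1 (Polynomial.X^n) x : ℝ) : ℂ) := by
  have habs : |2*π*x| = 2*π*x := abs_of_pos (by positivity)
  have hexp : -|2*π*x|^3 = W1.eval x := by
    rw [habs]
    simp only [W1, Polynomial.eval_mul, Polynomial.eval_C, Polynomial.eval_pow, Polynomial.eval_X]
    ring
  simp only [G1, pexp, hexp, Polynomial.eval_pow, Polynomial.eval_X]
  push_cast
  ring

lemma G2_pexp (x : ℝ) (n : ℕ) :
    ((x:ℂ))^n * G2 x = ((pexp W2 (Polynomial.X^n) x : ℝ) : ℂ) := by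
  have hexp : -(2*π*x)^2 = W2.eval x := by
    simp only [W2, Polynomial.eval_mul, Polynomial.eval_C, Polynomial.eval_pow, Polynomial.eval_X]
    ring
  simp only [G2, pexp, hexp, Polynomial.eval_pow, Polynomial.eval_X]
  push_cast
  ring

lemma integrable_pow_mul_G1 (n : ℕ) : Integrable (fun x : ℝ => ((x:ℂ))^n * G1 x) := by
  have hIoi : IntegrableOn (fun x : ℝ => ((x:ℂ))^n * G1 x) (Ioi 0) := by
    refine IntegrableOn.congr_fun ((integrableOn_Ioi_pexp W1 (Polynomial.X^n) hW1).ofReal)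
      (fun x hx => (G1_pexp hx n).symm) measurableSet_Ioi
  refine integrable_of_neg hIoi ?_
  have : (fun x : ℝ => (((-x : ℝ):ℂ))^n * G1 (-x))
      = fun x : ℝ => (-1:ℂ)^n * (((x:ℂ))^n * G1 x) := by
    funext x
    rw [G1_even]
    push_cast
    ring
  rw [this]
  exact hIoi.const_mul _

lemma integrable_pow_mul_G2 (n : ℕ) : Integrable (fun x : ℝ => ((x:ℂ))^n * G2 x) := by
  have hIoi : IntegrableOn (fun x : ℝ => ((x:ℂ))^n * G2 x) (Ioi 0) := by
    refine IntegrableOn.congr_fun ((integrableOn_Ioi_pexp W2 (Polynomial.X^n) hW2).ofReal)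
      (fun x hx => (G2_pexp x n).symm) measurableSet_Ioi
  refine integrable_of_neg hIoi ?_
  have : (fun x : ℝ => (((-x : ℝ):ℂ))^n * G2 (-x))
      = fun x : ℝ => (-1:ℂ)^n * (((x:ℂ))^n * G2 x) := by
    funext x
    rw [G2_even]
    push_cast
    ring
  rw [this]
  exact hIoi.const_mul _

/-! ### Decay corollaries -/

lemma cubic_decay (j : ℕ) : ∃ C : ℝ, 0 ≤ C ∧ ∀ s : ℝ, s ≠ 0 →
    ‖∫ k : ℝ, Complex.exp (↑k * ↑s * Complex.I)
        * ((-(2*(π:ℂ)*Complex.I))^j * ((k:ℂ))^j * G1 k)‖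
      ≤ C / |s|^(j+4) := by
  set c : ℂ := (-(2*(π:ℂ)*Complex.I))^j with hc
  set u := uSeq c W1 (Polynomial.X^j) with hu
  refine ⟨2*‖u (j+3) 0‖ + 2*∫ k in Ioi (0:ℝ), ‖u (j+4) k‖, by positivity, fun s hs => ?_⟩
  have hv : Integrable (fun k : ℝ => c * ((k:ℂ))^j * G1 k) := by
    have := (integrable_pow_mul_G1 j).const_mul c
    simpa [mul_assoc] using this
  have hodd : ∀ k : ℝ, c * (((-k : ℝ):ℂ))^j * G1 (-k) = (-1:ℂ)^j * (c * ((k:ℂ))^j * G1 k) := by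
    intro k
    rw [G1_even]
    push_cast
    ring
  have hvu : ∀ k : ℝ, 0 < k → c * ((k:ℂ))^j * G1 k = u 0 k := by
    intro k hk
    rw [hu, uSeq, mul_assoc, G1_pexp hk j]
    rfl
  have hcancel : ∀ m, m ≤ j + 2 → u m 0 * (1 + (-1:ℂ)^(j+m+1)) = 0 := by
    intro m hm
    rcases Nat.even_or_odd (j + m) with he | ho
    · have hodd1 : Odd (j + m + 1) := he.add_one
      rw [hodd1.neg_one_pow]
      simp
    · have h0 : u m 0 = c * (((Rseq (derivative W1) (Polynomial.X^j) m).coeff 0 : ℝ) : ℂ) :=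
        uSeq_zero c W1 (Polynomial.X^j) W1_zero m
      have hder : derivative W1 = Polynomial.C (-(2*π)^3*3) * Polynomial.X^2 := by
        simp only [W1, Polynomial.derivative_C_mul, Polynomial.derivative_X_pow]
        rw [Polynomial.C_mul]
        norm_num
        ring
      have hcoeff : (Rseq (derivative W1) (Polynomial.X^j) m).coeff 0 = 0 := by
        rw [hder]
        refine cubic_coeff _ j m 0 ?_
        obtain ⟨t, ht⟩ := ho
        omega
      rw [h0, hcoeff]
      simp
  have h := decay_bound u j (j+2)
    hs (fun m _ k => hasDerivAt_uSeq c W1 (Polynomial.X^j) m k)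
    (fun m _ => integrableOn_uSeq c W1 (Polynomial.X^j) hW1 m)
    (fun m _ => tendsto_uSeq c W1 (Polynomial.X^j) hW1 m)
    hv hodd hvu hcancel
  have e1 : j + 2 + 1 = j + 3 := by omega
  have e2 : j + 2 + 2 = j + 4 := by omega
  rw [e1, e2] at h
  exact h

lemma gauss_decay (l N : ℕ) : ∃ C : ℝ, 0 ≤ C ∧ ∀ s : ℝ, s ≠ 0 →
    ‖∫ k : ℝ, Complex.exp (↑k * ↑s * Complex.I)
        * ((-(2*(π:ℂ)*Complex.I))^l * ((k:ℂ))^l * G2 k)‖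
      ≤ C / |s|^(N+2) := by
  set c : ℂ := (-(2*(π:ℂ)*Complex.I))^l with hc
  set u := uSeq c W2 (Polynomial.X^l) with hu
  refine ⟨2*‖u (N+1) 0‖ + 2*∫ k in Ioi (0:ℝ), ‖u (N+2) k‖, by positivity, fun s hs => ?_⟩
  have hv : Integrable (fun k : ℝ => c * ((k:ℂ))^l * G2 k) := by
    have := (integrable_pow_mul_G2 l).const_mul c
    simpa [mul_assoc] using this
  have hodd : ∀ k : ℝ, c * (((-k : ℝ):ℂ))^l * G2 (-k) = (-1:ℂ)^l * (c * ((k:ℂ))^l * G2 k) := by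
    intro k
    rw [G2_even]
    push_cast
    ring
  have hvu : ∀ k : ℝ, 0 < k → c * ((k:ℂ))^l * G2 k = u 0 k := by
    intro k hk
    rw [hu, uSeq, mul_assoc, G2_pexp k l]
    rfl
  have hcancel : ∀ m, m ≤ N → u m 0 * (1 + (-1:ℂ)^(l+m+1)) = 0 := by
    intro m hm
    rcases Nat.even_or_odd (l + m) with he | ho
    · have hodd1 : Odd (l + m + 1) := he.add_one
      rw [hodd1.neg_one_pow]
      simp
    · have h0 : u m 0 = c * (((Rseq (derivative W2) (Polynomial.X^l) m).coeff 0 : ℝ) : ℂ) :=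
        uSeq_zero c W2 (Polynomial.X^l) W2_zero m
      have hder : derivative W2 = Polynomial.C (-(2*π)^2*2) * Polynomial.X^1 := by
        simp only [W2, Polynomial.derivative_C_mul, Polynomial.derivative_X_pow]
        rw [Polynomial.C_mul]
        norm_num
        ring
      have hcoeff : (Rseq (derivative W2) (Polynomial.X^l) m).coeff 0 = 0 := by
        rw [hder]
        refine parity_coeff _ l m 0 ?_
        obtain ⟨t, ht⟩ := ho
        omega
      rw [h0, hcoeff]
      simp
  exact decay_bound u l N
    hs (fun m _ k => hasDerivAt_uSeq c W2 (Polynomial.X^l) m k)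
    (fun m _ => integrableOn_uSeq c W2 (Polynomial.X^l) hW2 m)
    (fun m _ => tendsto_uSeq c W2 (Polynomial.X^l) hW2 m)
    hv hodd hvu hcancel


/-! ### Bridging to the Mathlib Fourier integral -/

lemma fourier_as (f : ℝ → ℂ) (t : ℝ) :
    (𝓕 f) t = ∫ k : ℝ, Complex.exp (↑k * ↑(-2*π*t) * Complex.I) * f k := by
  rw [Real.fourier_eq']
  congr 1
  funext k
  rw [smul_eq_mul]
  congr 2
  simp only [RCLike.inner_apply, conj_trivial]
  push_cast
  ring

noncomputable def φ1 : ℝ → ℂ := 𝓕 G1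
noncomputable def φ2 : ℝ → ℂ := 𝓕 G2

noncomputable def h1fun (j : ℕ) : ℝ → ℂ :=
  fun x => (-(2*(π:ℂ)*Complex.I))^j * ((x:ℂ))^j * G1 x
noncomputable def h2fun (l : ℕ) : ℝ → ℂ :=
  fun x => (-(2*(π:ℂ)*Complex.I))^l * ((x:ℂ))^l * G2 x

lemma integrable_h1fun (j : ℕ) : Integrable (h1fun j) := by
  refine ((integrable_pow_mul_G1 j).const_mul ((-(2*(π:ℂ)*Complex.I))^j)).congr ?_
  filter_upwards with x
  rw [h1fun]
  ring

lemma integrable_h2fun (l : ℕ) : Integrable (h2fun l) := by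
  refine ((integrable_pow_mul_G2 l).const_mul ((-(2*(π:ℂ)*Complex.I))^l)).congr ?_
  filter_upwards with x
  rw [h2fun]
  ring

lemma smul_G1_eq (j : ℕ) :
    (fun x : ℝ => (-2*(π:ℂ)*Complex.I*(x:ℂ))^j • G1 x) = h1fun j := by
  funext x
  rw [smul_eq_mul, h1fun, show (-2*(π:ℂ)*Complex.I*(x:ℂ)) = (-(2*(π:ℂ)*Complex.I))*(x:ℂ) by ring,
    mul_pow]

lemma smul_G2_eq (l : ℕ) :
    (fun x : ℝ => (-2*(π:ℂ)*Complex.I*(x:ℂ))^l • G2 x) = h2fun l := by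
  funext x
  rw [smul_eq_mul, h2fun, show (-2*(π:ℂ)*Complex.I*(x:ℂ)) = (-(2*(π:ℂ)*Complex.I))*(x:ℂ) by ring,
    mul_pow]

lemma integrable_pow_smul_G1 (n : ℕ) : Integrable (fun x : ℝ => x^n • G1 x) := by
  have h := integrable_pow_mul_G1 n
  refine h.congr ?_
  filter_upwards with x
  rw [Complex.real_smul]
  push_cast
  ring

lemma integrable_pow_smul_G2 (n : ℕ) : Integrable (fun x : ℝ => x^n • G2 x) := by
  have h := integrable_pow_mul_G2 n
  refine h.congr ?_
  filter_upwards with x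
  rw [Complex.real_smul]
  push_cast
  ring

lemma φ1_iter (j : ℕ) : deriv^[j] φ1 = 𝓕 (h1fun j) := by
  rw [← iteratedDeriv_eq_iterate, φ1,
    Real.iteratedDeriv_fourier (N := (⊤:ℕ∞)) (fun n _ => integrable_pow_smul_G1 n) le_top]
  exact congrArg _ (smul_G1_eq j)

lemma φ2_iter (l : ℕ) : deriv^[l] φ2 = 𝓕 (h2fun l) := by
  rw [← iteratedDeriv_eq_iterate, φ2,
    Real.iteratedDeriv_fourier (N := (⊤:ℕ∞)) (fun n _ => integrable_pow_smul_G2 n) le_top]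
  exact congrArg _ (smul_G2_eq l)

lemma integrable_smul_h1fun (j : ℕ) : Integrable (fun x : ℝ => x • h1fun j x) := by
  have := (integrable_pow_mul_G1 (j+1)).const_mul ((-(2*(π:ℂ)*Complex.I))^j)
  refine this.congr ?_
  filter_upwards with x
  rw [h1fun, Complex.real_smul]
  push_cast
  ring

lemma integrable_smul_h2fun (l : ℕ) : Integrable (fun x : ℝ => x • h2fun l x) := by
  have := (integrable_pow_mul_G2 (l+1)).const_mul ((-(2*(π:ℂ)*Complex.I))^l)
  refine this.congr ?_
  filter_upwards with x
  rw [h2fun, Complex.real_smul]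
  push_cast
  ring

lemma φ1_hasDeriv (j : ℕ) (t : ℝ) :
    HasDerivAt (deriv^[j] φ1) (deriv^[j+1] φ1 t) t := by
  rw [φ1_iter j, φ1_iter (j+1)]
  have h := Real.hasDerivAt_fourier (integrable_h1fun j) (integrable_smul_h1fun j) t
  have he : (fun x : ℝ => (-2*(π:ℂ)*Complex.I*(x:ℂ)) • h1fun j x) = h1fun (j+1) := by
    funext x
    rw [smul_eq_mul, h1fun, h1fun, pow_succ]
    push_cast
    ring
  rw [show ((-2)*(π:ℂ)*Complex.I : ℂ) = -(2*(π:ℂ)*Complex.I) by ring] at h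
  rw [← he]
  rw [show (fun x : ℝ => (-2*(π:ℂ)*Complex.I*(x:ℂ)) • h1fun j x) = fun x : ℝ => (-(2*(π:ℂ)*Complex.I)*(x:ℂ)) • h1fun j x by funext x; congr 1; ring]
  exact h

lemma φ2_hasDeriv (l : ℕ) (t : ℝ) :
    HasDerivAt (deriv^[l] φ2) (deriv^[l+1] φ2 t) t := by
  rw [φ2_iter l, φ2_iter (l+1)]
  have h := Real.hasDerivAt_fourier (integrable_h2fun l) (integrable_smul_h2fun l) t
  have he : (fun x : ℝ => (-2*(π:ℂ)*Complex.I*(x:ℂ)) • h2fun l x) = h2fun (l+1) := by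
    funext x
    rw [smul_eq_mul, h2fun, h2fun, pow_succ]
    push_cast
    ring
  rw [show ((-2)*(π:ℂ)*Complex.I : ℂ) = -(2*(π:ℂ)*Complex.I) by ring] at h
  rw [← he]
  rw [show (fun x : ℝ => (-2*(π:ℂ)*Complex.I*(x:ℂ)) • h2fun l x) = fun x : ℝ => (-(2*(π:ℂ)*Complex.I)*(x:ℂ)) • h2fun l x by funext x; congr 1; ring]
  exact h

lemma φ1_cont (j : ℕ) : Continuous (deriv^[j] φ1) :=
  continuous_iff_continuousAt.mpr fun t => (φ1_hasDeriv j t).continuousAt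

lemma φ2_cont (l : ℕ) : Continuous (deriv^[l] φ2) :=
  continuous_iff_continuousAt.mpr fun t => (φ2_hasDeriv l t).continuousAt

lemma φ1_norm_bound (j : ℕ) (t : ℝ) :
    ‖deriv^[j] φ1 t‖ ≤ ∫ k : ℝ, ‖h1fun j k‖ := by
  rw [φ1_iter j, Real.fourier_eq]
  refine (norm_integral_le_integral_norm _).trans (le_of_eq ?_)
  simp_rw [Circle.norm_smul]

lemma φ2_norm_bound (l : ℕ) (t : ℝ) :
    ‖deriv^[l] φ2 t‖ ≤ ∫ k : ℝ, ‖h2fun l k‖ := by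
  rw [φ2_iter l, Real.fourier_eq]
  refine (norm_integral_le_integral_norm _).trans (le_of_eq ?_)
  simp_rw [Circle.norm_smul]

lemma twopit_ne {t : ℝ} (ht : t ≠ 0) : (-2*π*t) ≠ 0 :=
  mul_ne_zero (mul_ne_zero (by norm_num) Real.pi_ne_zero) ht

lemma abs_le_abs_twopit (t : ℝ) : |t| ≤ |(-2)*π*t| := by
  rw [abs_mul, abs_mul, abs_of_pos Real.pi_pos, show |(-2:ℝ)| = 2 by norm_num]
  nlinarith [abs_nonneg t, Real.pi_gt_three]

lemma abs_le_pow_twopit (t : ℝ) (n : ℕ) : |t| ^ n ≤ |(-2)*π*t| ^ n :=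
  pow_le_pow_left₀ (abs_nonneg t) (abs_le_abs_twopit t) n

lemma φ1_decay (j : ℕ) : ∃ C : ℝ, 0 ≤ C ∧ ∀ t : ℝ, t ≠ 0 →
    ‖deriv^[j] φ1 t‖ ≤ C / |t|^(j+4) := by
  obtain ⟨C, hC0, hC⟩ := cubic_decay j
  refine ⟨C, hC0, fun t ht => ?_⟩
  rw [φ1_iter j, fourier_as]
  refine (hC (-2*π*t) (twopit_ne ht)).trans ?_
  exact div_le_div_of_nonneg_left hC0 (pow_pos (abs_pos.mpr ht) _) (abs_le_pow_twopit t (j+4))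

lemma φ2_decay (l N : ℕ) : ∃ C : ℝ, 0 ≤ C ∧ ∀ t : ℝ, t ≠ 0 →
    ‖deriv^[l] φ2 t‖ ≤ C / |t|^(N+2) := by
  obtain ⟨C, hC0, hC⟩ := gauss_decay l N
  refine ⟨C, hC0, fun t ht => ?_⟩
  rw [φ2_iter l, fourier_as]
  refine (hC (-2*π*t) (twopit_ne ht)).trans ?_
  exact div_le_div_of_nonneg_left hC0 (pow_pos (abs_pos.mpr ht) _) (abs_le_pow_twopit t (N+2))


/-! ### Weighted integrability from pointwise decay -/

lemma integrableOn_Iio_neg'' {f : ℝ → ℝ} {c : ℝ} (h : IntegrableOn (fun x => f (-x)) (Ioi (-c))) :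
    IntegrableOn f (Iio c) := by
  have A : MeasurableEmbedding (fun x : ℝ => -x) :=
    (Homeomorph.neg ℝ).isClosedEmbedding.measurableEmbedding
  have hmap : Measure.map (fun x : ℝ => -x) (volume.restrict (Ioi (-c)))
      = volume.restrict (Iio c) := by
    rw [show Ioi (-c) = (fun x : ℝ => -x) ⁻¹' (Iio c) by ext x; simp [neg_lt],
      ← Measure.restrict_map measurable_neg measurableSet_Iio, Measure.map_neg_eq_self]
  rw [IntegrableOn, ← hmap, A.integrable_map_iff]
  exact h

lemma integrable_norm_mul_rpow {F : ℝ → ℂ} (hF : Continuous F) (n : ℕ) {B C : ℝ}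
    (hB : ∀ t, ‖F t‖ ≤ B) (hC : ∀ t : ℝ, t ≠ 0 → ‖F t‖ ≤ C / |t|^n)
    {β : ℝ} (hβ0 : 0 ≤ β) (hβ : β + 2 ≤ (n:ℝ)) :
    Integrable (fun t : ℝ => ‖F t‖ * |t| ^ β) := by
  have hC0 : 0 ≤ C := by
    have h := hC 1 one_ne_zero
    simp only [abs_one, one_pow, div_one] at h
    exact (norm_nonneg _).trans h
  have hmeas : AEStronglyMeasurable (fun t : ℝ => ‖F t‖ * |t| ^ β) volume := by
    refine (hF.norm.measurable.mul ?_).aestronglyMeasurable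
    exact (continuous_abs.measurable).pow_const β
  have key : ∀ t : ℝ, 1 ≤ |t| → ‖F t‖ * |t|^β ≤ C * |t| ^ (-2:ℝ) := by
    intro t ht
    have ht0 : t ≠ 0 := by
      intro h; rw [h, abs_zero] at ht; linarith
    have habs : (0:ℝ) < |t| := abs_pos.mpr ht0
    have h1 : ‖F t‖ * |t|^β ≤ (C / |t|^n) * |t|^β :=
      mul_le_mul_of_nonneg_right (hC t ht0) (Real.rpow_nonneg habs.le β)
    refine h1.trans ?_
    have h2 : (C / |t|^n) * |t|^β = C * |t| ^ (β - (n:ℝ)) := by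
      rw [Real.rpow_sub habs, ← Real.rpow_natCast |t| n]
      ring
    rw [h2]
    exact mul_le_mul_of_nonneg_left
      (Real.rpow_le_rpow_of_exponent_le ht (by linarith)) hC0
  have hnormeq : ∀ t : ℝ, ‖‖F t‖ * |t| ^ β‖ = ‖F t‖ * |t| ^ β := fun t =>
    Real.norm_of_nonneg (mul_nonneg (norm_nonneg _) (Real.rpow_nonneg (abs_nonneg t) β))
  have hIoi : IntegrableOn (fun t : ℝ => ‖F t‖ * |t|^β) (Ioi 1) := by
    refine Integrable.mono'
      (((integrableOn_Ioi_rpow_of_lt (show (-2:ℝ) < -1 by norm_num) one_pos)).const_mul C)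
      hmeas.restrict ?_
    filter_upwards [ae_restrict_mem measurableSet_Ioi] with t ht
    rw [hnormeq t]
    have h1 : (1:ℝ) ≤ |t| := by
      rw [abs_of_pos (lt_trans one_pos ht)]
      exact le_of_lt ht
    refine (key t h1).trans (le_of_eq ?_)
    rw [abs_of_pos (lt_trans one_pos ht)]
  have hIio : IntegrableOn (fun t : ℝ => ‖F t‖ * |t|^β) (Iio (-1)) := by
    refine integrableOn_Iio_neg'' ?_
    rw [neg_neg]
    refine Integrable.mono'
      (((integrableOn_Ioi_rpow_of_lt (show (-2:ℝ) < -1 by norm_num) one_pos)).const_mul C)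
      ?_ ?_
    · have : AEStronglyMeasurable (fun t : ℝ => ‖F (-t)‖ * |(-t)| ^ β) volume := by
        refine ((hF.comp continuous_neg).norm.measurable.mul ?_).aestronglyMeasurable
        exact ((continuous_abs.comp continuous_neg).measurable).pow_const β
      exact this.restrict
    · filter_upwards [ae_restrict_mem measurableSet_Ioi] with t ht
      have h1 : (1:ℝ) ≤ |(-t)| := by
        rw [abs_neg, abs_of_pos (lt_trans one_pos ht)]
        exact le_of_lt ht
      have := key (-t) h1
      rw [Real.norm_of_nonneg (mul_nonneg (norm_nonneg _) (Real.rpow_nonneg (abs_nonneg (-t)) β))]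
      refine this.trans (le_of_eq ?_)
      rw [abs_neg, abs_of_pos (lt_trans one_pos ht)]
  have hIcc : IntegrableOn (fun t : ℝ => ‖F t‖ * |t|^β) (Icc (-1) 1) := by
    refine Measure.integrableOn_of_bounded (M := B) ?_ hmeas ?_
    · exact (measure_Icc_lt_top).ne
    · filter_upwards [ae_restrict_mem measurableSet_Icc] with t ht
      rw [hnormeq t]
      have habs1 : |t| ≤ 1 := abs_le.mpr ⟨ht.1, ht.2⟩
      have h2 : |t| ^ β ≤ 1 := Real.rpow_le_one (abs_nonneg t) habs1 hβ0
      have hB0 : 0 ≤ B := (norm_nonneg _).trans (hB 0)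
      calc ‖F t‖ * |t| ^ β ≤ B * 1 :=
        mul_le_mul (hB t) h2 (Real.rpow_nonneg (abs_nonneg t) β) hB0
      _ = B := mul_one B
  have hcover : (univ : Set ℝ) ⊆ Iio (-1) ∪ (Icc (-1) 1 ∪ Ioi 1) := by
    intro x _
    by_cases h1 : x < -1
    · exact Or.inl h1
    · by_cases h2 : x ≤ 1
      · exact Or.inr (Or.inl ⟨le_of_not_gt h1, h2⟩)
      · exact Or.inr (Or.inr (lt_of_not_ge h2))
  have := (hIio.union (hIcc.union hIoi)).mono_set hcover
  rwa [integrableOn_univ] at this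

lemma moment_φ1 (j : ℕ) {β : ℝ} (h0 : 0 ≤ β) (hβ : β ≤ (j:ℝ)+2) :
    Integrable (fun t : ℝ => ‖deriv^[j] φ1 t‖ * |t| ^ β) := by
  obtain ⟨C, hC0, hC⟩ := φ1_decay j
  exact integrable_norm_mul_rpow (φ1_cont j) (j+4) (φ1_norm_bound j) hC h0
    (by push_cast; linarith)

lemma moment_φ2 (l : ℕ) {β : ℝ} (h0 : 0 ≤ β) :
    Integrable (fun t : ℝ => ‖deriv^[l] φ2 t‖ * |t| ^ β) := by
  obtain ⟨C, hC0, hC⟩ := φ2_decay l ⌈β⌉₊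
  refine integrable_norm_mul_rpow (φ2_cont l) (⌈β⌉₊+2) (φ2_norm_bound l) hC h0 ?_
  push_cast
  have := Nat.le_ceil β
  linarith


/-! ### 2D inversion and factorization -/

noncomputable def eqv : EuclideanSpace ℝ (Fin 2) ≃ᵐ ℝ × ℝ :=
  (MeasurableEquiv.toLp 2 (Fin 2 → ℝ)).symm.trans MeasurableEquiv.finTwoArrow

lemma eqv_apply (v : EuclideanSpace ℝ (Fin 2)) : eqv v = (v 0, v 1) := rfl

lemma eqv_symm_apply_zero (p : ℝ × ℝ) : (eqv.symm p) 0 = p.1 := rfl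
lemma eqv_symm_apply_one (p : ℝ × ℝ) : (eqv.symm p) 1 = p.2 := rfl

lemma eqv_mp : MeasurePreserving eqv volume volume :=
  (volume_preserving_finTwoArrow ℝ).comp
    (EuclideanSpace.volume_preserving_symm_measurableEquiv_toLp (Fin 2))

lemma eqv_cont : Continuous (eqv : EuclideanSpace ℝ (Fin 2) → ℝ × ℝ) := by
  rw [show (eqv : EuclideanSpace ℝ (Fin 2) → ℝ × ℝ)
      = fun v : EuclideanSpace ℝ (Fin 2) => ((v 0 : ℝ), (v 1 : ℝ)) from rfl]
  exact ((EuclideanSpace.proj (0 : Fin 2)).continuous).prodMk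
    ((EuclideanSpace.proj (1 : Fin 2)).continuous)

lemma inner_two (v w : EuclideanSpace ℝ (Fin 2)) :
    (inner ℝ v w : ℝ) = v 0 * w 0 + v 1 * w 1 := by
  simp [PiLp.inner_apply, Fin.sum_univ_two, RCLike.inner_apply, conj_trivial]
  ring

lemma inv1d (g : ℝ → ℂ) (hge : ∀ ξ, g (-ξ) = g ξ) (t : ℝ) :
    (∫ ξ : ℝ, Complex.exp (↑(2*π*t*ξ) * Complex.I) * g ξ) = 𝓕 g t := by
  rw [fourier_as]
  have h := integral_neg_eq_self (fun ξ : ℝ => Complex.exp (↑(2*π*t*ξ) * Complex.I) * g ξ) volume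
  rw [← h]
  congr 1
  funext ξ
  rw [hge]
  rw [show (((2*π*t*(-ξ) : ℝ)):ℂ) * Complex.I = (ξ:ℂ) * (((-2*π*t : ℝ)):ℂ) * Complex.I by
    push_cast; ring]

lemma integrable_G1 : Integrable G1 := by
  have := integrable_pow_mul_G1 0
  simpa using this

lemma integrable_G2 : Integrable G2 := by
  have := integrable_pow_mul_G2 0
  simpa using this

lemma psi_factor (ψ : ℝ × ℝ → ℂ) (hcont : Continuous ψ) (hint : Integrable ψ)
    (hFourier : ∀ k : ℝ × ℝ,
      (∫ x : ℝ × ℝ, Complex.exp (-Complex.I *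
          ((k.1 : ℂ) * (x.1 : ℂ) + (k.2 : ℂ) * (x.2 : ℂ))) * ψ x)
        = (Real.exp (-(|k.1| ^ 3 + k.2 ^ 2)) : ℂ)) :
    ∀ x : ℝ × ℝ, ψ x = φ1 x.1 * φ2 x.2 := by
  have hΨcont : Continuous (fun v : EuclideanSpace ℝ (Fin 2) => ψ (eqv v)) :=
    hcont.comp eqv_cont
  have hΨint : Integrable (fun v : EuclideanSpace ℝ (Fin 2) => ψ (eqv v)) :=
    (eqv_mp.integrable_comp_emb eqv.measurableEmbedding).mpr hint
  have hFT : ∀ w : EuclideanSpace ℝ (Fin 2),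
      𝓕 (fun v : EuclideanSpace ℝ (Fin 2) => ψ (eqv v)) w
        = G1 (w 0) * G2 (w 1) := by
    intro w
    rw [Real.fourier_eq']
    have hcomp : (fun v : EuclideanSpace ℝ (Fin 2) =>
        Complex.exp (↑(-2 * π * (inner ℝ v w : ℝ)) * Complex.I) • ψ (eqv v))
          = fun v : EuclideanSpace ℝ (Fin 2) => (fun p : ℝ × ℝ => Complex.exp (-Complex.I *
              (((2*π*(w 0) : ℝ) : ℂ) * (p.1 : ℂ) + ((2*π*(w 1) : ℝ) : ℂ) * (p.2 : ℂ))) * ψ p)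
              (eqv v) := by
      funext v
      rw [smul_eq_mul]
      congr 1
      rw [inner_two]
      rw [eqv_apply]
      push_cast
      ring_nf
    rw [hcomp, eqv_mp.integral_comp eqv.measurableEmbedding
      (fun p : ℝ × ℝ => Complex.exp (-Complex.I *
        (((2*π*(w 0) : ℝ) : ℂ) * (p.1 : ℂ) + ((2*π*(w 1) : ℝ) : ℂ) * (p.2 : ℂ))) * ψ p)]
    have hF := hFourier ((2*π*(w 0) : ℝ), (2*π*(w 1) : ℝ))
    dsimp only at hF
    rw [hF]
    show ((Real.exp (-(|2*π*(w 0)| ^ 3 + (2*π*(w 1)) ^ 2)) : ℝ) : ℂ) = G1 (w 0) * G2 (w 1)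
    rw [G1, G2, ← Complex.ofReal_mul, ← Real.exp_add]
    congr 1
    ring
  have h12 : Integrable (fun p : ℝ × ℝ => G1 p.1 * G2 p.2) := by
    rw [MeasureTheory.Measure.volume_eq_prod]
    exact Integrable.mul_prod integrable_G1 integrable_G2
  have h𝓕int : Integrable (𝓕
      (fun v : EuclideanSpace ℝ (Fin 2) => ψ (eqv v))) := by
    rw [show 𝓕 (fun v : EuclideanSpace ℝ (Fin 2) => ψ (eqv v))
        = (fun p : ℝ × ℝ => G1 p.1 * G2 p.2) ∘ eqv from funext fun w => hFT w]
    exact (eqv_mp.integrable_comp_emb eqv.measurableEmbedding).mpr h12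
  have hinv := hΨcont.fourierInv_fourier_eq hΨint h𝓕int
  intro x
  have hv := congrFun hinv (eqv.symm x)
  rw [Real.fourierInv_eq'] at hv
  simp only [MeasurableEquiv.apply_symm_apply] at hv
  rw [← hv]
  have hcomp2 : (fun w : EuclideanSpace ℝ (Fin 2) =>
      Complex.exp (↑(2 * π * (inner ℝ w (eqv.symm x) : ℝ)) * Complex.I)
        • 𝓕 (fun v : EuclideanSpace ℝ (Fin 2) => ψ (eqv v)) w)
      = fun w : EuclideanSpace ℝ (Fin 2) => (fun q : ℝ × ℝ =>
          (Complex.exp (↑(2*π*x.1*q.1) * Complex.I) * G1 q.1)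
            * (Complex.exp (↑(2*π*x.2*q.2) * Complex.I) * G2 q.2)) (eqv w) := by
    funext w
    rw [smul_eq_mul, hFT w, inner_two w (eqv.symm x), eqv_symm_apply_zero, eqv_symm_apply_one,
      eqv_apply]
    show Complex.exp (↑(2 * π * (w 0 * x.1 + w 1 * x.2)) * Complex.I) * (G1 (w 0) * G2 (w 1))
      = (Complex.exp (↑(2*π*x.1*(w 0)) * Complex.I) * G1 (w 0))
          * (Complex.exp (↑(2*π*x.2*(w 1)) * Complex.I) * G2 (w 1))
    rw [show (((2 * π * (w 0 * x.1 + w 1 * x.2) : ℝ)):ℂ) * Complex.I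
        = ((2*π*x.1*(w 0) : ℝ):ℂ) * Complex.I + ((2*π*x.2*(w 1) : ℝ):ℂ) * Complex.I by
      push_cast; ring]
    rw [Complex.exp_add]
    ring
  rw [hcomp2, eqv_mp.integral_comp eqv.measurableEmbedding
    (fun q : ℝ × ℝ => (Complex.exp (↑(2*π*x.1*q.1) * Complex.I) * G1 q.1)
      * (Complex.exp (↑(2*π*x.2*q.2) * Complex.I) * G2 q.2))]
  rw [MeasureTheory.Measure.volume_eq_prod]
  have hpm := MeasureTheory.integral_prod_mul (μ := (volume : Measure ℝ)) (ν := (volume : Measure ℝ))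
    (f := fun t : ℝ => Complex.exp (↑(2*π*x.1*t) * Complex.I) * G1 t)
    (g := fun t : ℝ => Complex.exp (↑(2*π*x.2*t) * Complex.I) * G2 t)
  beta_reduce at hpm
  rw [inv1d G1 G1_even x.1, inv1d G2 G2_even x.2] at hpm
  exact hpm


lemma rpow_add_le {a b : ℝ} (ha : 0 ≤ a) (hb : 0 ≤ b) {α : ℝ} (hα : 0 ≤ α) :
    (a + b) ^ α ≤ 2^α * (a^α + b^α) := by
  have h1 : a + b ≤ 2 * max a b := by
    rcases le_total a b with h | h
    · rw [max_eq_right h]; linarith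
    · rw [max_eq_left h]; linarith
  have h2 : (a+b)^α ≤ (2 * max a b)^α :=
    Real.rpow_le_rpow (by linarith) h1 hα
  refine h2.trans ?_
  rw [Real.mul_rpow (by norm_num) (le_max_iff.mpr (Or.inl ha))]
  refine mul_le_mul_of_nonneg_left ?_ (Real.rpow_nonneg (by norm_num) α)
  rcases le_total a b with h | h
  · rw [max_eq_right h]
    exact le_add_of_nonneg_left (Real.rpow_nonneg ha α)
  · rw [max_eq_left h]
    exact le_add_of_nonneg_right (Real.rpow_nonneg hb α)

lemma pd2_iter (l : ℕ) :
    pd2^[l] (fun x : ℝ × ℝ => φ1 x.1 * φ2 x.2)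
      = fun x : ℝ × ℝ => φ1 x.1 * deriv^[l] φ2 x.2 := by
  induction l with
  | zero => rfl
  | succ l ih =>
    rw [Function.iterate_succ_apply', ih]
    funext x
    show deriv (fun t => φ1 x.1 * deriv^[l] φ2 t) x.2 = φ1 x.1 * deriv^[l+1] φ2 x.2
    rw [deriv_const_mul _ ((φ2_hasDeriv l x.2).differentiableAt)]
    rw [Function.iterate_succ_apply' deriv l φ2]

lemma pd1_iter (j : ℕ) (g : ℝ → ℂ) :
    pd1^[j] (fun x : ℝ × ℝ => φ1 x.1 * g x.2)
      = fun x : ℝ × ℝ => deriv^[j] φ1 x.1 * g x.2 := by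
  induction j with
  | zero => rfl
  | succ j ih =>
    rw [Function.iterate_succ_apply', ih]
    funext x
    show deriv (fun t => deriv^[j] φ1 t * g x.2) x.1 = deriv^[j+1] φ1 x.1 * g x.2
    rw [deriv_mul_const ((φ1_hasDeriv j x.1).differentiableAt)]
    rw [Function.iterate_succ_apply' deriv j φ1]

end KMB

/-- Moment bounds on the anisotropic heat kernel: if `ψ` is smooth, integrable,
with Fourier transform `ψ̂(k) = exp(-(|k₁|³ + k₂²))`, then for all `j, l ≥ 0`
and `0 ≤ α ≤ j + 2`, the moment `∫ |∂₁^j ∂₂^l ψ(x)| · d(x,0)^α dx` is finite,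
where `d(x,0) = |x₁| + |x₂|^(2/3)`. -/
theorem kernel_moment_bounds (ψ : ℝ × ℝ → ℂ)
    (hsmooth : ContDiff ℝ (⊤ : ℕ∞) ψ) (hint : Integrable ψ)
    (hFourier : ∀ k : ℝ × ℝ,
      (∫ x : ℝ × ℝ, Complex.exp (-Complex.I *
          ((k.1 : ℂ) * (x.1 : ℂ) + (k.2 : ℂ) * (x.2 : ℂ))) * ψ x)
        = (Real.exp (-(|k.1| ^ 3 + k.2 ^ 2)) : ℂ)) :
    ∀ (j l : ℕ) (α : ℝ), 0 ≤ α → α ≤ (j : ℝ) + 2 →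
      Integrable (fun x : ℝ × ℝ =>
        ‖(pd1^[j] (pd2^[l] ψ)) x‖ * (|x.1| + |x.2| ^ ((2 : ℝ) / 3)) ^ α) := by
  intro j l α hα0 hα
  have hψeq : ψ = fun x : ℝ × ℝ => KMB.φ1 x.1 * KMB.φ2 x.2 :=
    funext (KMB.psi_factor ψ hsmooth.continuous hint hFourier)
  have hpd : pd1^[j] (pd2^[l] ψ)
      = fun x : ℝ × ℝ => deriv^[j] KMB.φ1 x.1 * deriv^[l] KMB.φ2 x.2 := by
    rw [hψeq, KMB.pd2_iter l, KMB.pd1_iter j]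
  simp only [hpd]
  have hα23 : 0 ≤ 2/3*α := by linarith
  have hj2 : (0:ℝ) ≤ (j:ℝ) + 2 := by positivity
  have h1 : Integrable (fun x : ℝ × ℝ =>
      (‖deriv^[j] KMB.φ1 x.1‖ * |x.1| ^ α) * ‖deriv^[l] KMB.φ2 x.2‖) := by
    rw [MeasureTheory.Measure.volume_eq_prod]
    refine MeasureTheory.Integrable.mul_prod
      (f := fun t : ℝ => ‖deriv^[j] KMB.φ1 t‖ * |t| ^ α)
      (g := fun t : ℝ => ‖deriv^[l] KMB.φ2 t‖) (KMB.moment_φ1 j hα0 hα) ?_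
    refine (KMB.moment_φ2 l (le_refl 0)).congr ?_
    filter_upwards with t
    rw [Real.rpow_zero, mul_one]
  have h2 : Integrable (fun x : ℝ × ℝ =>
      ‖deriv^[j] KMB.φ1 x.1‖ * (‖deriv^[l] KMB.φ2 x.2‖ * |x.2| ^ (2/3*α))) := by
    rw [MeasureTheory.Measure.volume_eq_prod]
    refine MeasureTheory.Integrable.mul_prod
      (f := fun t : ℝ => ‖deriv^[j] KMB.φ1 t‖)
      (g := fun t : ℝ => ‖deriv^[l] KMB.φ2 t‖ * |t| ^ (2/3*α)) ?_ (KMB.moment_φ2 l hα23)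
    refine (KMB.moment_φ1 j (le_refl 0) hj2).congr ?_
    filter_upwards with t
    rw [Real.rpow_zero, mul_one]
  have hdom := (h1.add h2).const_mul ((2:ℝ) ^ α)
  refine hdom.mono' ?_ ?_
  · have hm1 : Continuous (fun x : ℝ × ℝ => ‖deriv^[j] KMB.φ1 x.1 * deriv^[l] KMB.φ2 x.2‖) :=
      (((KMB.φ1_cont j).comp continuous_fst).mul ((KMB.φ2_cont l).comp continuous_snd)).norm
    have hm2 : Measurable (fun x : ℝ × ℝ => (|x.1| + |x.2| ^ ((2:ℝ)/3)) ^ α) :=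
      (measurable_fst.abs.add (measurable_snd.abs.pow_const _)).pow_const _
    exact (hm1.measurable.mul hm2).aestronglyMeasurable
  · filter_upwards with x
    rw [Real.norm_of_nonneg (by positivity)]
    have key : (|x.1| + |x.2| ^ ((2:ℝ)/3)) ^ α ≤ 2^α * (|x.1|^α + |x.2| ^ (2/3*α)) := by
      have h := KMB.rpow_add_le (abs_nonneg x.1)
        (Real.rpow_nonneg (abs_nonneg x.2) ((2:ℝ)/3)) hα0
      rwa [← Real.rpow_mul (abs_nonneg x.2)] at h
    calc ‖deriv^[j] KMB.φ1 x.1 * deriv^[l] KMB.φ2 x.2‖ * (|x.1| + |x.2| ^ ((2:ℝ)/3)) ^ α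
        = (‖deriv^[j] KMB.φ1 x.1‖ * ‖deriv^[l] KMB.φ2 x.2‖) * (|x.1| + |x.2| ^ ((2:ℝ)/3)) ^ α := by
          rw [norm_mul]
      _ ≤ (‖deriv^[j] KMB.φ1 x.1‖ * ‖deriv^[l] KMB.φ2 x.2‖)
            * (2^α * (|x.1|^α + |x.2| ^ (2/3*α))) := by
          exact mul_le_mul_of_nonneg_left key (by positivity)
      _ = (2:ℝ)^α * ((‖deriv^[j] KMB.φ1 x.1‖ * |x.1|^α) * ‖deriv^[l] KMB.φ2 x.2‖
            + ‖deriv^[j] KMB.φ1 x.1‖ * (‖deriv^[l] KMB.φ2 x.2‖ * |x.2| ^ (2/3*α))) := by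
          ring
end
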